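/- arXiv:2409.17491 — 9 statements merged into one kernel-verified Lean document; each statement's English description precedes it below -/
import Mathlib

section
/- Let n ≥ 6 be even. Let G_{3,0} be the graph obtained by adding a perfect matching between K_{n/2} and an independent set of size n/2. Then G_{3,0} is diameter-3-critical: its diameter is 3, and for every edge e, the graph G_{3,0} − e has diameter greater than 3. -/
def G30 (m : ℕ) : SimpleGraph (Fin m ⊕ Fin m) :=
  SimpleGraph.fromRel (fun u v => match u, v with
    | Sum.inl _, Sum.inl _ => True
    | Sum.inl a, Sum.inr b => a = b
    | _, _ => False)

open SimpleGraph Sum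

lemma G30_adj_ll {m} (a b : Fin m) : (G30 m).Adj (inl a) (inl b) ↔ a ≠ b := by
  simp [G30, SimpleGraph.fromRel_adj]

lemma G30_adj_lr {m} (a b : Fin m) : (G30 m).Adj (inl a) (inr b) ↔ a = b := by
  simp [G30, SimpleGraph.fromRel_adj]

lemma G30_adj_rl {m} (a b : Fin m) : (G30 m).Adj (inr a) (inl b) ↔ b = a := by
  simp [G30, SimpleGraph.fromRel_adj]

lemma G30_adj_rr {m} (a b : Fin m) : ¬ (G30 m).Adj (inr a) (inr b) := by
  simp [G30, SimpleGraph.fromRel_adj]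

lemma le_edist_of_walks {V : Type*} (H : SimpleGraph V) {u v : V} (k : ℕ)
    (h : ∀ p : H.Walk u v, k ≤ p.length) : (k : ℕ∞) ≤ H.edist u v := by
  rw [SimpleGraph.edist_eq_sInf]
  refine le_sInf ?_
  rintro x ⟨p, rfl⟩
  simpa using (Nat.cast_le (α := ℕ∞)).mpr (h p)

-- any walk inl a → inr b with a ≠ b has length ≥ 2
lemma walk_lr_len {m} {a b : Fin m} (hab : a ≠ b) (p : (G30 m).Walk (inl a) (inr b)) :
    2 ≤ p.length := by
  cases p with
  | cons h q =>
    rename_i w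
    cases q with
    | nil => exact absurd ((G30_adj_lr a b).mp h) hab
    | cons h' q' => simp [SimpleGraph.Walk.length_cons]

-- any walk inr a → inr b with a ≠ b has length ≥ 3
lemma walk_rr_len {m} {a b : Fin m} (hab : a ≠ b) (p : (G30 m).Walk (inr a) (inr b)) :
    3 ≤ p.length := by
  cases p with
  | nil => exact absurd rfl hab
  | cons h q =>
    rename_i w
    cases w with
    | inr c => exact absurd h (G30_adj_rr a c)
    | inl c =>
      obtain rfl : c = a := (G30_adj_rl a c).mp h
      have := walk_lr_len hab q
      simp [SimpleGraph.Walk.length_cons]; omega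

section Del
variable {m : ℕ} {a b : Fin m}

lemma del_not_adj (hab : a ≠ b) :
    ¬ ((G30 m).deleteEdges {s(inl a, inl b)}).Adj (inl b) (inl a) := by
  intro h
  rw [SimpleGraph.deleteEdges_adj] at h
  exact h.2 (by rw [Set.mem_singleton_iff, Sym2.eq_swap])

lemma del_walk_ll (hab : a ≠ b)
    (r : ((G30 m).deleteEdges {s(inl a, inl b)}).Walk (inl b) (inl a)) : 2 ≤ r.length := by
  cases r with
  | nil => exact absurd rfl hab.symm
  | cons h' r' =>
    cases r' with
    | nil => exact absurd h' (del_not_adj hab)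
    | cons h'' r'' => simp [SimpleGraph.Walk.length_cons]

lemma del_walk_lr (hab : a ≠ b)
    (q : ((G30 m).deleteEdges {s(inl a, inl b)}).Walk (inl a) (inr b)) : 3 ≤ q.length := by
  rw [← SimpleGraph.Walk.length_reverse]
  generalize q.reverse = t
  cases t with
  | cons h u =>
    rename_i w
    cases w with
    | inr c => exact absurd h.1 (G30_adj_rr b c)
    | inl c =>
      obtain rfl : c = b := (G30_adj_rl b c).mp h.1
      have := del_walk_ll hab u
      simp only [SimpleGraph.Walk.length_cons]
      omega

lemma del_walk_rr (hab : a ≠ b)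
    (p : ((G30 m).deleteEdges {s(inl a, inl b)}).Walk (inr a) (inr b)) : 4 ≤ p.length := by
  cases p with
  | nil => exact absurd rfl hab
  | cons h q =>
    rename_i w
    cases w with
    | inr c => exact absurd h.1 (G30_adj_rr a c)
    | inl c =>
      obtain rfl : c = a := (G30_adj_rl a c).mp h.1
      have := del_walk_lr hab q
      simp only [SimpleGraph.Walk.length_cons]
      omega

lemma matching_del (a : Fin m) :
    3 < ((G30 m).deleteEdges {s(inl a, inr a)}).ediam := by
  have hnr : ¬ ((G30 m).deleteEdges {s(inl a, inr a)}).Reachable (inr a) (inl a) := by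
    rintro ⟨p⟩
    cases p with
    | cons h q =>
      rename_i w
      cases w with
      | inr c => exact absurd h.1 (G30_adj_rr a c)
      | inl c =>
        obtain rfl : c = a := (G30_adj_rl a c).mp h.1
        exact h.2 (by simp [SimpleGraph.fromEdgeSet_adj, Sym2.eq_swap])
  have h1 := SimpleGraph.edist_eq_top_of_not_reachable hnr
  have h2 := SimpleGraph.edist_le_ediam
    (G := (G30 m).deleteEdges {s(inl a, inr a)}) (u := inr a) (v := inl a)
  rw [h1, top_le_iff] at h2
  rw [h2]
  exact Ne.lt_top (by simp)

lemma clique_del (hab : a ≠ b) :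
    3 < ((G30 m).deleteEdges {s(inl a, inl b)}).ediam := by
  have h4 : (4 : ℕ∞) ≤ ((G30 m).deleteEdges {s(inl a, inl b)}).edist (inr a) (inr b) :=
    le_edist_of_walks _ 4 (del_walk_rr hab)
  calc (3:ℕ∞) < 4 := by norm_num
    _ ≤ _ := h4
    _ ≤ _ := SimpleGraph.edist_le_ediam

end Del

lemma G30_edist_le_three {m : ℕ} (u v : Fin m ⊕ Fin m) : (G30 m).edist u v ≤ 3 := by
  have step : ∀ (x y : Fin m ⊕ Fin m) (p : (G30 m).Walk x y), p.length ≤ 3 →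
      (G30 m).edist x y ≤ 3 := by
    intro x y p hp
    calc (G30 m).edist x y ≤ p.length := SimpleGraph.edist_le p
      _ ≤ 3 := by exact_mod_cast hp
  cases u with
  | inl a =>
    cases v with
    | inl b =>
      rcases eq_or_ne a b with rfl | hab
      · simp [SimpleGraph.edist_self]
      · exact step _ _ (.cons ((G30_adj_ll a b).mpr hab) .nil) (by simp)
    | inr b =>
      rcases eq_or_ne a b with rfl | hab
      · exact step _ _ (.cons ((G30_adj_lr a a).mpr rfl) .nil) (by simp)
      · exact step _ _ (.cons ((G30_adj_ll a b).mpr hab)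
          (.cons ((G30_adj_lr b b).mpr rfl) .nil)) (by simp)
  | inr a =>
    cases v with
    | inl b =>
      rcases eq_or_ne a b with rfl | hab
      · exact step _ _ (.cons ((G30_adj_rl a a).mpr rfl) .nil)
          (by simp [SimpleGraph.Walk.length_cons])
      · exact step _ _ (.cons ((G30_adj_rl a a).mpr rfl)
          (.cons ((G30_adj_ll a b).mpr hab) .nil)) (by simp [SimpleGraph.Walk.length_cons])
    | inr b =>
      rcases eq_or_ne a b with rfl | hab
      · simp [SimpleGraph.edist_self]
      · exact step _ _ (.cons ((G30_adj_rl a a).mpr rfl)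
          (.cons ((G30_adj_ll a b).mpr hab)
          (.cons ((G30_adj_lr b b).mpr rfl) .nil))) (by simp)

lemma G30_ediam_eq_three {m : ℕ} (hm : 2 ≤ m) : (G30 m).ediam = 3 := by
  have ha : ((⟨0, by omega⟩ : Fin m) : Fin m) ≠ ⟨1, by omega⟩ := by
    simp [Fin.ext_iff]
  refine le_antisymm (SimpleGraph.ediam_le_of_edist_le fun u v => G30_edist_le_three u v) ?_
  calc (3:ℕ∞) ≤ (G30 m).edist (inr ⟨0, by omega⟩) (inr ⟨1, by omega⟩) :=
        le_edist_of_walks _ 3 (walk_rr_len ha)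
    _ ≤ _ := SimpleGraph.edist_le_ediam

/-- `G_{3,0}` is diameter-3-critical: its diameter is `3` and deleting any edge
increases the diameter beyond `3`. -/
theorem stmt_1 (n : ℕ) (hn6 : 6 ≤ n) (hne : Even n) :
    (G30 (n / 2)).diam = 3 ∧
      ∀ e ∈ (G30 (n / 2)).edgeSet, 3 < ((G30 (n / 2)).deleteEdges {e}).ediam := by
  have hm : 2 ≤ n / 2 := by omega
  constructor
  · rw [SimpleGraph.diam, G30_ediam_eq_three hm]
    rfl
  · intro e he
    induction e using Sym2.ind with
    | _ u v =>
      rw [SimpleGraph.mem_edgeSet] at he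
      cases u with
      | inl a =>
        cases v with
        | inl b => exact clique_del ((G30_adj_ll a b).mp he)
        | inr b =>
          obtain rfl : a = b := (G30_adj_lr a b).mp he
          exact matching_del a
      | inr a =>
        cases v with
        | inl b =>
          obtain rfl : a = b := ((G30_adj_rl a b).mp he).symm
          rw [show s(inr a, inl a) = s(inl a, (inr a : Fin (n/2) ⊕ Fin (n/2))) from Sym2.eq_swap]
          exact matching_del a
        | inr b => exact absurd he (G30_adj_rr a b)
end

section
/- Let n ≥ 6 be even, A a clique of size n/2, B an independent set of size n/2, θ : A → B a bijection with each a adjacent to θ(a), and M a matching in A. Form G_{3,M} by deleting the edges of M and adding θ(u)θ(v) for each uv ∈ M. Then G_{3,M} has diameter 3. -/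
def IsMatchingRel {m : ℕ} (M : Fin m → Fin m → Prop) : Prop :=
  Symmetric M ∧ Irreflexive M ∧ ∀ a b c, M a b → M a c → b = c

def G3M (m : ℕ) (M : Fin m → Fin m → Prop) : SimpleGraph (Fin m ⊕ Fin m) :=
  SimpleGraph.fromRel (fun u v => match u, v with
    | Sum.inl a, Sum.inl b => ¬ M a b ∧ ¬ M b a
    | Sum.inl a, Sum.inr b => a = b
    | Sum.inr a, Sum.inr b => M a b
    | _, _ => False)

section aux
variable {m : ℕ} {M : Fin m → Fin m → Prop}

lemma adj_ll (a b : Fin m) : (G3M m M).Adj (.inl a) (.inl b) ↔ a ≠ b ∧ ¬M a b ∧ ¬M b a := by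
  simp only [G3M, SimpleGraph.fromRel_adj, ne_eq, Sum.inl.injEq]
  tauto

lemma adj_lr (a b : Fin m) : (G3M m M).Adj (.inl a) (.inr b) ↔ a = b := by
  simp [G3M, SimpleGraph.fromRel_adj]

lemma adj_rl (a b : Fin m) : (G3M m M).Adj (.inr a) (.inl b) ↔ b = a := by
  rw [SimpleGraph.adj_comm]; exact adj_lr b a

lemma adj_rr (a b : Fin m) : (G3M m M).Adj (.inr a) (.inr b) ↔ a ≠ b ∧ (M a b ∨ M b a) := by
  simp only [G3M, SimpleGraph.fromRel_adj, ne_eq, Sum.inr.injEq]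

lemma exists_third (hm : 3 ≤ m) (a b : Fin m) : ∃ c : Fin m, c ≠ a ∧ c ≠ b := by
  classical
  have hcard : ({a, b} : Finset (Fin m)).card ≤ 2 := Finset.card_insert_le _ _ |>.trans (by simp)
  have : (({a, b} : Finset (Fin m))ᶜ).Nonempty := by
    rw [← Finset.card_pos, Finset.card_compl, Fintype.card_fin]
    omega
  obtain ⟨c, hc⟩ := this
  simp only [Finset.mem_compl, Finset.mem_insert, Finset.mem_singleton, not_or] at hc
  exact ⟨c, hc.1, hc.2⟩

lemma edist_le_three (hm : 3 ≤ m) (hM : IsMatchingRel M) (u v : Fin m ⊕ Fin m) :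
    (G3M m M).edist u v ≤ 3 := by
  obtain ⟨hsymm, hirr, huniq⟩ := hM
  have key_lr : ∀ a b : Fin m, (G3M m M).edist (.inl a) (.inr b) ≤ 2 := by
    intro a b
    by_cases hab : a = b
    · subst hab
      calc (G3M m M).edist (.inl a) (.inr a) ≤ 1 :=
            ((adj_lr a a).mpr rfl).toWalk.edist_le
        _ ≤ 2 := by norm_num
    · by_cases hMab : M a b
      · have h1 : (G3M m M).Adj (.inl a) (.inr a) := (adj_lr a a).mpr rfl
        have h2 : (G3M m M).Adj (.inr a) (.inr b) := (adj_rr a b).mpr ⟨hab, Or.inl hMab⟩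
        have := (SimpleGraph.Walk.cons h1 h2.toWalk).edist_le
        simpa using this
      · have h1 : (G3M m M).Adj (.inl a) (.inl b) :=
          (adj_ll a b).mpr ⟨hab, hMab, fun h => hMab (hsymm h)⟩
        have h2 : (G3M m M).Adj (.inl b) (.inr b) := (adj_lr b b).mpr rfl
        have := (SimpleGraph.Walk.cons h1 h2.toWalk).edist_le
        simpa using this
  match u, v with
  | .inl a, .inl b =>
    by_cases hab : a = b
    · subst hab; simp [SimpleGraph.edist_self]
    · by_cases hMab : M a b
      · obtain ⟨c, hca, hcb⟩ := exists_third hm a b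
        have hMac : ¬ M a c := fun h => hcb (huniq a b c hMab h).symm
        have hMcb : ¬ M c b := fun h => hca (huniq b a c (hsymm hMab) (hsymm h)).symm
        have h1 : (G3M m M).Adj (.inl a) (.inl c) :=
          (adj_ll a c).mpr ⟨fun h => hca h.symm, hMac, fun h => hMac (hsymm h)⟩
        have h2 : (G3M m M).Adj (.inl c) (.inl b) :=
          (adj_ll c b).mpr ⟨hcb, hMcb, fun h => hMcb (hsymm h)⟩
        have := (SimpleGraph.Walk.cons h1 h2.toWalk).edist_le
        calc (G3M m M).edist (Sum.inl a) (Sum.inl b) ≤ 2 := by simpa using this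
          _ ≤ 3 := by norm_num
      · have h1 : (G3M m M).Adj (.inl a) (.inl b) :=
          (adj_ll a b).mpr ⟨hab, hMab, fun h => hMab (hsymm h)⟩
        calc (G3M m M).edist (Sum.inl a) (Sum.inl b) ≤ 1 := h1.toWalk.edist_le
          _ ≤ 3 := by norm_num
  | .inl a, .inr b => exact (key_lr a b).trans (by norm_num)
  | .inr a, .inl b =>
    rw [SimpleGraph.edist_comm]
    exact (key_lr b a).trans (by norm_num)
  | .inr a, .inr b =>
    by_cases hab : a = b
    · subst hab; simp [SimpleGraph.edist_self]
    · by_cases hMab : M a b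
      · have h1 : (G3M m M).Adj (.inr a) (.inr b) := (adj_rr a b).mpr ⟨hab, Or.inl hMab⟩
        calc (G3M m M).edist (Sum.inr a) (Sum.inr b) ≤ 1 := h1.toWalk.edist_le
          _ ≤ 3 := by norm_num
      · have h1 : (G3M m M).Adj (.inr a) (.inl a) := (adj_rl a a).mpr rfl
        have h2 : (G3M m M).Adj (.inl a) (.inl b) :=
          (adj_ll a b).mpr ⟨hab, hMab, fun h => hMab (hsymm h)⟩
        have h3 : (G3M m M).Adj (.inl b) (.inr b) := (adj_lr b b).mpr rfl
        have := (SimpleGraph.Walk.cons h1 (SimpleGraph.Walk.cons h2 h3.toWalk)).edist_le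
        simpa using this

lemma walk_length_ge_three (hM : IsMatchingRel M) {a b : Fin m}
    (hab : a ≠ b) (hMab : ¬ M a b)
    (p : (G3M m M).Walk (.inr a) (.inr b)) : 3 ≤ p.length := by
  obtain ⟨hsymm, hirr, huniq⟩ := hM
  match p with
  | .nil => exact absurd rfl hab
  | .cons h .nil =>
    rw [adj_rr] at h
    rcases h.2 with h' | h'
    · exact absurd h' hMab
    · exact absurd (hsymm h') hMab
  | .cons (v := x) h (.cons h' .nil) =>
    exfalso
    match x with
    | .inl c =>
      rw [adj_rl] at h
      rw [adj_lr] at h'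
      exact hab (h.symm.trans h')
    | .inr c =>
      rw [adj_rr] at h
      rw [adj_rr] at h'
      have hca : M c a := h.2.elim (fun h => hsymm h) id
      have hcb : M c b := h'.2.elim id (fun h => hsymm h)
      exact hab (huniq c a b hca hcb)
  | .cons _ (.cons _ (.cons _ q)) =>
    simp only [SimpleGraph.Walk.length_cons]
    omega

end aux

/-- `G_{3,M}` has diameter `3`. -/
theorem stmt_4 (n : ℕ) (hn6 : 6 ≤ n) (hne : Even n)
    (M : Fin (n / 2) → Fin (n / 2) → Prop) (hM : IsMatchingRel M) :
    (G3M (n / 2) M).diam = 3 := by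
  classical
  have hm : 3 ≤ n / 2 := by omega
  have hub : (G3M (n/2) M).ediam ≤ 3 :=
    SimpleGraph.ediam_le_of_edist_le (edist_le_three hm hM)
  -- find a pair a ≠ b with ¬ M a b
  have hpair : ∃ a b : Fin (n/2), a ≠ b ∧ ¬ M a b := by
    refine ⟨⟨0, by omega⟩, ?_⟩
    by_cases h01 : M ⟨0, by omega⟩ ⟨1, by omega⟩
    · refine ⟨⟨2, by omega⟩, by simp [Fin.ext_iff], fun h => ?_⟩
      have := hM.2.2 _ _ _ h01 h
      simp [Fin.ext_iff] at this
    · exact ⟨⟨1, by omega⟩, by simp [Fin.ext_iff], h01⟩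
  obtain ⟨a, b, hab, hMab⟩ := hpair
  have hlb : (3 : ℕ∞) ≤ (G3M (n/2) M).edist (.inr a) (.inr b) := by
    have hfin : (G3M (n/2) M).edist (.inr a) (.inr b) ≤ 3 :=
      le_trans SimpleGraph.edist_le_ediam hub
    have hne_top : (G3M (n/2) M).edist (.inr a) (.inr b) ≠ ⊤ := fun h => by simp [h] at hfin
    lift (G3M (n/2) M).edist (.inr a) (.inr b) to ℕ using hne_top with k hk
    obtain ⟨p, hp⟩ := SimpleGraph.exists_walk_of_edist_eq_coe hk.symm
    have := walk_length_ge_three hM hab hMab p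
    exact_mod_cast hp ▸ (by exact_mod_cast this : (3:ℕ∞) ≤ (p.length : ℕ∞))
  have hediam : (G3M (n/2) M).ediam = 3 :=
    le_antisymm hub (hlb.trans SimpleGraph.edist_le_ediam)
  simp [SimpleGraph.diam, hediam]
end

section
/- Let n ≥ 6 be even and let G_{3,M} be constructed from a clique A of size n/2, an independent set B of size n/2, a bijection θ : A → B giving a perfect matching, and a matching M in A whose edges are replaced by their θ-images in B. Then G_{3,M} is diameter-3-critical: for every edge e of G_{3,M}, the graph G_{3,M} − e has diameter greater than 3. -/
namespace G3Maux

open SimpleGraph Sum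

variable {m : ℕ} {M : Fin m → Fin m → Prop}

@[simp] lemma adj_ll {a b : Fin m} :
    (G3M m M).Adj (inl a) (inl b) ↔ a ≠ b ∧ ¬ M a b ∧ ¬ M b a := by
  simp [G3M]; tauto

@[simp] lemma adj_lr {a b : Fin m} : (G3M m M).Adj (inl a) (inr b) ↔ a = b := by
  simp [G3M]

@[simp] lemma adj_rl {a b : Fin m} : (G3M m M).Adj (inr a) (inl b) ↔ b = a := by
  simp [G3M]

@[simp] lemma adj_rr {a b : Fin m} :
    (G3M m M).Adj (inr a) (inr b) ↔ a ≠ b ∧ (M a b ∨ M b a) := by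
  simp [G3M]

lemma lt_edist_of_forall {V : Type*} {H : SimpleGraph V} {u v : V} {k : ℕ}
    (h : ∀ w : H.Walk u v, ¬ w.length ≤ k) : (k : ℕ∞) < H.edist u v := by
  by_contra hc
  push_neg at hc
  have hne : H.edist u v ≠ ⊤ := fun ht => by
    rw [ht] at hc; exact (ENat.coe_ne_top k) (top_le_iff.mp hc)
  obtain ⟨w, hw⟩ := H.exists_walk_of_edist_ne_top hne
  refine h w ?_
  have : (w.length : ℕ∞) ≤ k := hw ▸ hc
  exact_mod_cast this

lemma edist_le_of_walk {V : Type*} {H : SimpleGraph V} {u v : V} {k : ℕ}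
    (w : H.Walk u v) (h : w.length ≤ k) : H.edist u v ≤ k :=
  le_trans (SimpleGraph.edist_le w) (by exact_mod_cast h)

/-- Upper bound: every pair is at distance at most 3. -/
lemma edist_le_three (hM : IsMatchingRel M) (u v : Fin m ⊕ Fin m) :
    (G3M m M).edist u v ≤ 3 := by
  obtain ⟨sy, ir, un⟩ := hM
  have norm : ∀ {x y : Fin m}, (M x y ∨ M y x) → M x y := fun h => h.elim id (fun h => sy h)
  have key_lr : ∀ a b : Fin m, (G3M m M).edist (inl a) (inr b) ≤ 3 := by
    intro a b
    by_cases hab : a = b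
    · subst hab
      exact edist_le_of_walk (Walk.cons (by simp) Walk.nil) (by simp)
    · by_cases hMab : M a b ∨ M b a
      · have h' : M a b := norm hMab
        exact edist_le_of_walk
          (Walk.cons (show (G3M m M).Adj (inl a) (inr a) by simp)
            (Walk.cons (show (G3M m M).Adj (inr a) (inr b) by simp [hab, h'])
              Walk.nil)) (by simp)
      · push_neg at hMab
        exact edist_le_of_walk
          (Walk.cons (show (G3M m M).Adj (inl a) (inl b) by simp [hab, hMab.1, hMab.2])
            (Walk.cons (show (G3M m M).Adj (inl b) (inr b) by simp)
              Walk.nil)) (by simp)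
  rcases u with a | a <;> rcases v with b | b
  · by_cases hab : a = b
    · subst hab; simp [SimpleGraph.edist_self]
    · by_cases hMab : M a b ∨ M b a
      · have h' : M a b := norm hMab
        exact edist_le_of_walk
          (Walk.cons (show (G3M m M).Adj (inl a) (inr a) by simp)
            (Walk.cons (show (G3M m M).Adj (inr a) (inr b) by simp [hab, h'])
              (Walk.cons (show (G3M m M).Adj (inr b) (inl b) by simp)
                Walk.nil))) (by simp)
      · push_neg at hMab
        exact edist_le_of_walk
          (Walk.cons (show (G3M m M).Adj (inl a) (inl b) by simp [hab, hMab.1, hMab.2])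
            Walk.nil) (by simp)
  · exact key_lr a b
  · rw [SimpleGraph.edist_comm]; exact key_lr b a
  · by_cases hab : a = b
    · subst hab; simp [SimpleGraph.edist_self]
    · by_cases hMab : M a b ∨ M b a
      · exact edist_le_of_walk
          (Walk.cons (show (G3M m M).Adj (inr a) (inr b) by simp [hab, hMab])
            Walk.nil) (by simp)
      · push_neg at hMab
        exact edist_le_of_walk
          (Walk.cons (show (G3M m M).Adj (inr a) (inl a) by simp)
            (Walk.cons (show (G3M m M).Adj (inl a) (inl b) by simp [hab, hMab.1, hMab.2])
              (Walk.cons (show (G3M m M).Adj (inl b) (inr b) by simp)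
                Walk.nil))) (by simp)

/-- Two unmatched vertices in B are at distance at least 3. -/
lemma two_lt_edist_rr (hM : IsMatchingRel M) {a b : Fin m} (hab : a ≠ b)
    (h1 : ¬ M a b) (h2 : ¬ M b a) :
    (2 : ℕ∞) < (G3M m M).edist (inr a) (inr b) := by
  obtain ⟨sy, ir, un⟩ := hM
  apply lt_edist_of_forall
  intro w hw
  cases w with
  | nil => exact hab rfl
  | @cons _ x _ h1' p =>
    cases p with
    | nil => simp at h1'; tauto
    | @cons _ y _ h2' p =>
      cases p with
      | nil =>
        cases x with
        | inl c =>
          simp at h1' h2'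
          subst h1' h2'; exact hab rfl
        | inr c =>
          simp at h1' h2'
          have h3 : M c a := (h1'.2.elim (fun h => sy h) id)
          have h4 : M c b := (h2'.2.elim id (fun h => sy h))
          exact hab (un c a b h3 h4)
      | cons h3' p =>
        simp [SimpleGraph.Walk.length_cons] at hw

/-- Criticality: deleting an edge of the clique. -/
lemma critA (hM : IsMatchingRel M) {a b : Fin m} (hab : a ≠ b)
    (h1 : ¬ M a b) (h2 : ¬ M b a) :
    (3 : ℕ∞) < ((G3M m M).deleteEdges {s(inl a, inl b)}).ediam := by
  obtain ⟨sy, ir, un⟩ := hM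
  have split : ∀ {x y : Fin m ⊕ Fin m},
      ((G3M m M).deleteEdges {s(inl a, inl b)}).Adj x y →
      (G3M m M).Adj x y ∧ s(x, y) ≠ s(inl a, inl b) := by
    intro x y h
    rw [SimpleGraph.deleteEdges_adj] at h
    simpa using h
  refine lt_of_lt_of_le ?_
    (SimpleGraph.edist_le_ediam (u := (inr a : Fin m ⊕ Fin m)) (v := inr b))
  apply lt_edist_of_forall
  intro w hw
  cases w with
  | nil => exact hab rfl
  | @cons _ x _ h1' p =>
    cases p with
    | nil =>
      obtain ⟨ha1, hd1⟩ := split h1'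
      simp at ha1
      exact ha1.2.elim h1 h2
    | @cons _ y _ h2' p =>
      cases p with
      | nil =>
        obtain ⟨ha1, hd1⟩ := split h1'
        obtain ⟨ha2, hd2⟩ := split h2'
        cases x with
        | inl c =>
          simp at ha1 ha2
          subst ha1; subst ha2; exact hab rfl
        | inr c =>
          simp at ha1 ha2
          have h3 : M c a := ha1.2.elim (fun h => sy h) id
          have h4 : M c b := ha2.2.elim id (fun h => sy h)
          exact hab (un c a b h3 h4)
      | @cons _ z _ h3' p =>
        cases p with
        | nil =>
          obtain ⟨ha1, hd1⟩ := split h1'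
          obtain ⟨ha2, hd2⟩ := split h2'
          obtain ⟨ha3, hd3⟩ := split h3'
          cases x with
          | inl c =>
            simp at ha1
            subst ha1
            cases y with
            | inl d =>
              simp at ha3
              subst ha3
              exact hd2 rfl
            | inr d =>
              simp at ha2 ha3
              subst ha2
              exact absurd (ha3.2.elim (fun h => sy h) id) h2
          | inr c =>
            simp at ha1
            have h3 : M a c := ha1.2.elim id (fun h => sy h)
            cases y with
            | inl d =>
              simp at ha2 ha3
              subst ha2; subst ha3
              exact h1 h3
            | inr d =>
              simp at ha2 ha3
              have h4 : M c d := ha2.2.elim id (fun h => sy h)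
              have h5 : M d b := ha3.2.elim id (fun h => sy h)
              have had : a = d := un c a d (sy h3) h4
              subst had
              exact h1 h5
        | cons h4' p =>
          simp [SimpleGraph.Walk.length_cons] at hw; omega

/-- Criticality: deleting a matching edge between A and B. -/
lemma critMatch (hM : IsMatchingRel M) (a : Fin m) :
    (3 : ℕ∞) < ((G3M m M).deleteEdges {s(inl a, inr a)}).ediam := by
  obtain ⟨sy, ir, un⟩ := hM
  have split : ∀ {x y : Fin m ⊕ Fin m},
      ((G3M m M).deleteEdges {s(inl a, inr a)}).Adj x y →
      (G3M m M).Adj x y ∧ s(x, y) ≠ s(inl a, inr a) := by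
    intro x y h
    rw [SimpleGraph.deleteEdges_adj] at h
    simpa using h
  refine lt_of_lt_of_le ?_
    (SimpleGraph.edist_le_ediam (u := (inl a : Fin m ⊕ Fin m)) (v := inr a))
  apply lt_edist_of_forall
  intro w hw
  cases w with
  | @cons _ x _ h1' p =>
    cases p with
    | nil =>
      obtain ⟨ha1, hd1⟩ := split h1'
      exact hd1 rfl
    | @cons _ y _ h2' p =>
      cases p with
      | nil =>
        obtain ⟨ha1, hd1⟩ := split h1'
        obtain ⟨ha2, hd2⟩ := split h2'
        cases x with
        | inl c =>
          simp at ha1 ha2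
          subst ha2
          exact ha1.1 rfl
        | inr c =>
          simp at ha1
          subst ha1
          exact hd1 rfl
      | @cons _ z _ h3' p =>
        cases p with
        | nil =>
          obtain ⟨ha1, hd1⟩ := split h1'
          obtain ⟨ha2, hd2⟩ := split h2'
          obtain ⟨ha3, hd3⟩ := split h3'
          cases y with
          | inl d =>
            simp at ha3
            subst ha3
            exact hd3 rfl
          | inr d =>
            simp at ha3
            have hda : M d a := ha3.2.elim id (fun h => sy h)
            cases x with
            | inl c =>
              simp at ha1 ha2
              subst ha2
              exact ha1.2.1 (sy hda)
            | inr c =>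
              simp at ha1
              subst ha1
              exact hd1 rfl
        | cons h4' p =>
          simp [SimpleGraph.Walk.length_cons] at hw; omega

/-- Criticality: deleting an edge inside B. -/
lemma critB (hM : IsMatchingRel M) {a b : Fin m} (hab : a ≠ b) (hMab : M a b) :
    (3 : ℕ∞) < ((G3M m M).deleteEdges {s(inr a, inr b)}).ediam := by
  obtain ⟨sy, ir, un⟩ := hM
  have split : ∀ {x y : Fin m ⊕ Fin m},
      ((G3M m M).deleteEdges {s(inr a, inr b)}).Adj x y →
      (G3M m M).Adj x y ∧ s(x, y) ≠ s(inr a, inr b) := by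
    intro x y h
    rw [SimpleGraph.deleteEdges_adj] at h
    simpa using h
  refine lt_of_lt_of_le ?_
    (SimpleGraph.edist_le_ediam (u := (inr a : Fin m ⊕ Fin m)) (v := inr b))
  apply lt_edist_of_forall
  intro w hw
  cases w with
  | nil => exact hab rfl
  | @cons _ x _ h1' p =>
    cases p with
    | nil =>
      obtain ⟨ha1, hd1⟩ := split h1'
      exact hd1 rfl
    | @cons _ y _ h2' p =>
      cases p with
      | nil =>
        obtain ⟨ha1, hd1⟩ := split h1'
        obtain ⟨ha2, hd2⟩ := split h2'
        cases x with
        | inl c =>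
          simp at ha1 ha2
          subst ha1; subst ha2; exact hab rfl
        | inr c =>
          simp at ha1
          have h3 : M a c := ha1.2.elim id (fun h => sy h)
          have hbc : b = c := un a b c hMab h3
          subst hbc
          exact hd1 rfl
      | @cons _ z _ h3' p =>
        cases p with
        | nil =>
          obtain ⟨ha1, hd1⟩ := split h1'
          obtain ⟨ha2, hd2⟩ := split h2'
          obtain ⟨ha3, hd3⟩ := split h3'
          cases x with
          | inl c =>
            simp at ha1
            subst ha1
            cases y with
            | inl d =>
              simp at ha2 ha3
              subst ha3
              exact ha2.2.1 hMab
            | inr d =>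
              simp at ha2
              subst ha2
              exact hd3 rfl
          | inr c =>
            simp at ha1
            have h3 : M a c := ha1.2.elim id (fun h => sy h)
            have hbc : b = c := un a b c hMab h3
            subst hbc
            exact hd1 rfl
        | cons h4' p =>
          simp [SimpleGraph.Walk.length_cons] at hw; omega

lemma key (hm : 3 ≤ m) (hM : IsMatchingRel M) :
    (G3M m M).ediam = 3 ∧
      ∀ e ∈ (G3M m M).edgeSet, 3 < ((G3M m M).deleteEdges {e}).ediam := by
  obtain ⟨sy, ir, un⟩ := hM
  constructor
  · -- ediam = 3
    have hub : (G3M m M).ediam ≤ 3 :=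
      SimpleGraph.ediam_le_of_edist_le (edist_le_three ⟨sy, ir, un⟩)
    -- find a, b unmatched
    have h0 : (0 : ℕ) < m := by omega
    have h1 : (1 : ℕ) < m := by omega
    have h2 : (2 : ℕ) < m := by omega
    set a : Fin m := ⟨0, h0⟩
    set b1 : Fin m := ⟨1, h1⟩
    set b2 : Fin m := ⟨2, h2⟩
    obtain ⟨b, hab, hMab⟩ : ∃ b : Fin m, a ≠ b ∧ ¬ M a b := by
      by_cases hM1 : M a b1
      · refine ⟨b2, ?_, ?_⟩
        · simp [a, b2, Fin.ext_iff]
        · intro h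
          have : b1 = b2 := un a b1 b2 hM1 h
          simp [b1, b2, Fin.ext_iff] at this
      · exact ⟨b1, by simp [a, b1, Fin.ext_iff], hM1⟩
    have hlb := two_lt_edist_rr ⟨sy, ir, un⟩ hab hMab (fun h => hMab (sy h))
    have hlb' : (2 : ℕ∞) < (G3M m M).ediam := lt_of_lt_of_le hlb SimpleGraph.edist_le_ediam
    have h3le : (3 : ℕ∞) ≤ (G3M m M).ediam := by
      have := Order.add_one_le_of_lt hlb'
      rw [show (3 : ℕ∞) = 2 + 1 by norm_num]; exact this
    exact le_antisymm hub h3le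
  · -- criticality
    intro e he
    induction e using Sym2.ind with
    | _ u v =>
      rw [SimpleGraph.mem_edgeSet] at he
      rcases u with a | a <;> rcases v with b | b
      · simp at he
        exact critA ⟨sy, ir, un⟩ he.1 he.2.1 he.2.2
      · simp at he
        subst he
        exact critMatch ⟨sy, ir, un⟩ a
      · simp at he
        subst he
        rw [show ({s(Sum.inr b, Sum.inl b)} : Set (Sym2 (Fin m ⊕ Fin m)))
            = {s(Sum.inl b, Sum.inr b)} from by rw [Sym2.eq_swap]]
        exact critMatch ⟨sy, ir, un⟩ b
      · simp at he
        exact critB ⟨sy, ir, un⟩ he.1 ((he.2).elim id (fun h => sy h))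

end G3Maux

/-- `G_{3,M}` is diameter-3-critical: its diameter is `3` and for every edge `e`,
the graph `G_{3,M} − e` has diameter greater than `3`. -/
theorem stmt_5 (n : ℕ) (hn6 : 6 ≤ n) (hne : Even n)
    (M : Fin (n / 2) → Fin (n / 2) → Prop) (hM : IsMatchingRel M) :
    (G3M (n / 2) M).diam = 3 ∧
      ∀ e ∈ (G3M (n / 2) M).edgeSet, 3 < ((G3M (n / 2) M).deleteEdges {e}).ediam := by
  have hm : 3 ≤ n / 2 := by omega
  obtain ⟨h1, h2⟩ := G3Maux.key hm hM
  refine ⟨?_, h2⟩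
  rw [SimpleGraph.diam, h1]
  rfl
end

section
/- In the graph G_{3,M} (clique A, independent set B, perfect matching via bijection θ, matching M in A swapped to B), for any two vertices u, v in B with θ⁻¹(u)θ⁻¹(v) ∉ M, the distance between u and v is exactly 3. -/
/-- In `G_{3,M}`, any two distinct vertices `u, v` of the independent set `B` with
`θ⁻¹(u)θ⁻¹(v) ∉ M` are at distance exactly `3`. -/
theorem stmt_6 (n : ℕ) (hn6 : 6 ≤ n) (hne : Even n)
    (M : Fin (n / 2) → Fin (n / 2) → Prop) (hM : IsMatchingRel M)
    (u v : Fin (n / 2)) (huv : u ≠ v) (hMuv : ¬ M u v) :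
    (G3M (n / 2) M).dist (Sum.inr u) (Sum.inr v) = 3 := by
  obtain ⟨hsymm, hirr, hmatch⟩ := hM
  have hMvu : ¬ M v u := fun h => hMuv (hsymm h)
  set G := G3M (n / 2) M with hG
  have hadjRR : ∀ a b : Fin (n/2), G.Adj (Sum.inr a) (Sum.inr b) ↔
      (Sum.inr a : Fin (n/2) ⊕ Fin (n/2)) ≠ Sum.inr b ∧ (M a b ∨ M b a) := by
    intro a b; rw [hG, G3M, SimpleGraph.fromRel_adj]
  have hadjRL : ∀ a b : Fin (n/2), G.Adj (Sum.inr a) (Sum.inl b) ↔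
      (Sum.inr a : Fin (n/2) ⊕ Fin (n/2)) ≠ Sum.inl b ∧ (False ∨ b = a) := by
    intro a b; rw [hG, G3M, SimpleGraph.fromRel_adj]
  have hadjLR : ∀ a b : Fin (n/2), G.Adj (Sum.inl a) (Sum.inr b) ↔
      (Sum.inl a : Fin (n/2) ⊕ Fin (n/2)) ≠ Sum.inr b ∧ (a = b ∨ False) := by
    intro a b; rw [hG, G3M, SimpleGraph.fromRel_adj]
  have hadjLL : ∀ a b : Fin (n/2), G.Adj (Sum.inl a) (Sum.inl b) ↔
      (Sum.inl a : Fin (n/2) ⊕ Fin (n/2)) ≠ Sum.inl b ∧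
        ((¬ M a b ∧ ¬ M b a) ∨ (¬ M b a ∧ ¬ M a b)) := by
    intro a b; rw [hG, G3M, SimpleGraph.fromRel_adj]
  have h1 : G.Adj (Sum.inr u) (Sum.inl u) := (hadjRL u u).2 ⟨by simp, Or.inr rfl⟩
  have h2 : G.Adj (Sum.inl u) (Sum.inl v) :=
    (hadjLL u v).2 ⟨by simpa using huv, Or.inl ⟨hMuv, hMvu⟩⟩
  have h3 : G.Adj (Sum.inl v) (Sum.inr v) := (hadjLR v v).2 ⟨by simp, Or.inl rfl⟩
  have hle : G.dist (Sum.inr u) (Sum.inr v) ≤ 3 :=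
    SimpleGraph.dist_le (SimpleGraph.Walk.cons h1 (SimpleGraph.Walk.cons h2
      (SimpleGraph.Walk.cons h3 SimpleGraph.Walk.nil)))
  have hnadj : ¬ G.Adj (Sum.inr u) (Sum.inr v) := by
    rw [hadjRR]
    rintro ⟨-, h | h⟩
    · exact hMuv h
    · exact hMvu h
  have hnocommon : ∀ x, ¬ (G.Adj (Sum.inr u) x ∧ G.Adj x (Sum.inr v)) := by
    rintro (a | a) ⟨hxu, hxv⟩
    · rw [hadjRL] at hxu
      rw [hadjLR] at hxv
      have hau : a = u := by
        rcases hxu with ⟨-, h | h⟩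
        · exact h.elim
        · exact h
      have hav : a = v := by
        rcases hxv with ⟨-, h | h⟩
        · exact h
        · exact h.elim
      exact huv (hau ▸ hav)
    · rw [hadjRR] at hxu hxv
      have hua : M u a := by
        rcases hxu with ⟨-, h | h⟩
        · exact h
        · exact hsymm h
      have hva : M v a := by
        rcases hxv with ⟨-, h | h⟩
        · exact hsymm h
        · exact h
      exact huv (hmatch a u v (hsymm hua) (hsymm hva))
  have hlen : ∀ p : G.Walk (Sum.inr u) (Sum.inr v), 3 ≤ p.length := by
    intro p
    cases p with
    | nil => exact (huv rfl).elim
    | cons h q =>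
      cases q with
      | nil => exact absurd h hnadj
      | cons h' q' =>
        cases q' with
        | nil => exact absurd ⟨h, h'⟩ (hnocommon _)
        | cons h'' q'' =>
          simp only [SimpleGraph.Walk.length_cons]
          omega
  have hreach : G.Reachable (Sum.inr u) (Sum.inr v) :=
    ⟨SimpleGraph.Walk.cons h1 (SimpleGraph.Walk.cons h2
      (SimpleGraph.Walk.cons h3 SimpleGraph.Walk.nil))⟩
  obtain ⟨p, hp⟩ := hreach.exists_walk_length_eq_dist
  have := hlen p
  omega
end

section
/- Let G be a diameter-k-critical graph with k ≥ 3 and let G₀ be a subgraph of G such that for every edge e of G₀ the multiplicity m(e) < t and e is not a t-edge. Then no two distinct edges of G₀ are i-associated with the same fixed i-critical path, for any i ≥ 2. -/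
open SimpleGraph

/-- An edge `e` of `G` is `i`-associated with the pair `{x, y}` if
`d_G(x,y) ≤ i` and `d_{G−e}(x,y) > i`. -/
def IAssoc {V : Type*} (G : SimpleGraph V) (i : ℕ) (e : Sym2 V) (x y : V) : Prop :=
  e ∈ G.edgeSet ∧ G.dist x y ≤ i ∧ (i : ℕ∞) < (G.deleteEdges {e}).edist x y

/-- The multiplicity `m(e)` of an edge: the sum over `2 ≤ i ≤ k` of the number of
`i`-critical pairs `{x,y}` that are `i`-associated with `e` (equivalently, whose fixed
`i`-critical path is `i`-associated with `e`, as every shortest path between an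
`i`-associated pair passes through `e`). -/
noncomputable def Mult {V : Type*} (G : SimpleGraph V) (k : ℕ) (e : Sym2 V) : ℕ :=
  ∑ i ∈ Finset.Icc 2 k, {p : Sym2 V | ∃ x y, p = s(x, y) ∧ IAssoc G i e x y}.ncard

/-- A choice `Q` of fixed shortest paths is admissible if, for each `i`-critical pair
`{x,y}`, the fixed walk `Q i x y` is a shortest `(x,y)`-path. -/
def AdmissibleChoice {V : Type*} (G : SimpleGraph V) (Q : ∀ (_ : ℕ) (x y : V), G.Walk x y) : Prop :=
  ∀ i x y, (∃ e, IAssoc G i e x y) → (Q i x y).IsPath ∧ (Q i x y).length = G.dist x y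

/-- `e` is a `t`-edge: for some `2 ≤ i ≤ k` there is an `i`-critical pair `{x,y}` whose
fixed `i`-critical path `Q i x y` has length `i`, contains `e` as an edge incident with
`x` or `y`, and every edge of `Q i x y` incident with `x` or `y` is `i`-associated with
the pair and has multiplicity less than `t`. -/
def TEdge {V : Type*} (G : SimpleGraph V) (Q : ∀ (_ : ℕ) (x y : V), G.Walk x y)
    (k t : ℕ) (e : Sym2 V) : Prop :=
  ∃ i ∈ Finset.Icc 2 k, ∃ x y, (∃ f, IAssoc G i f x y) ∧ (Q i x y).length = i ∧
    e ∈ (Q i x y).edges ∧ (x ∈ e ∨ y ∈ e) ∧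
    ∀ f ∈ (Q i x y).edges, (x ∈ f ∨ y ∈ f) → IAssoc G i f x y ∧ Mult G k f < t

private lemma mem_support_of_mem_edges' {V : Type*} {G : SimpleGraph V} {u w : V}
    {P : G.Walk u w} {e : Sym2 V} (he : e ∈ P.edges) {v : V} (hv : v ∈ e) :
    v ∈ P.support := by
  induction e using Sym2.ind with
  | _ a b =>
    rcases Sym2.mem_iff.mp hv with rfl | rfl
    · exact P.fst_mem_support_of_mem_edges he
    · exact P.snd_mem_support_of_mem_edges he

private lemma edge_unique_at_start {V : Type*} {G : SimpleGraph V} {a d : V}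
    {P : G.Walk a d} (hP : P.IsPath) {f g : Sym2 V} (hf : f ∈ P.edges)
    (hg : g ∈ P.edges) (haf : a ∈ f) (hag : a ∈ g) : f = g := by
  cases P with
  | nil => simp at hf
  | cons h P' =>
    rw [Walk.cons_isPath_iff] at hP
    rw [Walk.edges_cons, List.mem_cons] at hf hg
    rcases hf with rfl | hf
    · rcases hg with rfl | hg
      · rfl
      · exact absurd (mem_support_of_mem_edges' hg hag) hP.2
    · exact absurd (mem_support_of_mem_edges' hf haf) hP.2

private lemma edge_unique_at_end {V : Type*} {G : SimpleGraph V} {a d : V}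
    {P : G.Walk a d} (hP : P.IsPath) {f g : Sym2 V} (hf : f ∈ P.edges)
    (hg : g ∈ P.edges) (hdf : d ∈ f) (hdg : d ∈ g) : f = g := by
  have hf' : f ∈ P.reverse.edges := by simpa using hf
  have hg' : g ∈ P.reverse.edges := by simpa using hg
  exact edge_unique_at_start hP.reverse hf' hg' hdf hdg

private lemma split_at_edge {V : Type*} {G : SimpleGraph V} {x y : V}
    (W : G.Walk x y) {e : Sym2 V} (he : e ∈ W.edges) :
    ∃ (u v : V) (h : G.Adj u v) (W₁ : G.Walk x u) (W₂ : G.Walk v y),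
      e = s(u, v) ∧ W = W₁.append (Walk.cons h W₂) := by
  induction W with
  | nil => simp at he
  | cons h W' ih =>
    rw [Walk.edges_cons, List.mem_cons] at he
    rcases he with rfl | he
    · exact ⟨_, _, h, Walk.nil, W', rfl, rfl⟩
    · obtain ⟨u, v, h', W₁, W₂, rfl, rfl⟩ := ih he
      exact ⟨u, v, h', Walk.cons h W₁, W₂, rfl, rfl⟩

private lemma core {V : Type*} {G : SimpleGraph V} {k t : ℕ}
    {Q : ∀ (_ : ℕ) (x y : V), G.Walk x y} (hQ : AdmissibleChoice G Q)
    {G₀ : SimpleGraph V} (hle : G₀ ≤ G)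
    (hG₀ : ∀ e ∈ G₀.edgeSet, Mult G k e < t ∧ ¬ TEdge G Q k t e)
    {i : ℕ} (hik : i ≤ k) {x y : V} {e₁ e₂ : Sym2 V}
    (he₁ : e₁ ∈ G₀.edgeSet) (he₂ : e₂ ∈ G₀.edgeSet)
    (hA1 : IAssoc G i e₁ x y) (hA2 : IAssoc G i e₂ x y)
    {a b c d : V} (hab : G.Adj a b) (hcd : G.Adj c d)
    (A : G.Walk x a) (C : G.Walk b c) (D : G.Walk d y)
    (hW : Q i x y = A.append (Walk.cons hab (C.append (Walk.cons hcd D))))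
    (hq1 : e₁ = s(a, b)) (hq2 : e₂ = s(c, d)) : False := by
  obtain ⟨hpath, hlen⟩ := hQ i x y ⟨e₁, hA1⟩
  -- the middle walk from a to d
  set M : G.Walk a d := Walk.cons hab (C.append (Walk.cons hcd Walk.nil)) with hM
  set i₁ : ℕ := C.length + 2 with hi₁
  have hMlen : M.length = i₁ := by simp [hM, hi₁]
  have hWlen : (Q i x y).length = A.length + i₁ + D.length := by
    rw [hW]; simp [Walk.length_append, hi₁]; omega
  -- edges decomposition and nodup facts
  have hedges : (Q i x y).edges = A.edges ++ (e₁ :: (C.edges ++ (e₂ :: D.edges))) := by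
    rw [hW, hq1, hq2]; simp [Walk.edges_append]
  have hnd : ((Q i x y).edges).Nodup := hpath.isTrail.edges_nodup
  rw [hedges] at hnd
  have h1A : e₁ ∉ A.edges := by
    intro h; exact (List.disjoint_of_nodup_append hnd) h (by simp)
  have h2A : e₂ ∉ A.edges := by
    intro h; exact (List.disjoint_of_nodup_append hnd) h (by simp)
  have hnd2 := (List.nodup_append.mp hnd).2.1
  have h1C : e₁ ∉ C.edges := by
    have := (List.nodup_cons.mp hnd2).1; simp at this; tauto
  have h1D : e₁ ∉ D.edges := by
    have := (List.nodup_cons.mp hnd2).1; simp at this; tauto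
  have h1ne2 : e₁ ≠ e₂ := by
    have := (List.nodup_cons.mp hnd2).1; simp at this; tauto
  have hnd3 := (List.nodup_cons.mp hnd2).2
  have h2C : e₂ ∉ C.edges := by
    intro h; exact (List.disjoint_of_nodup_append hnd3) h (by simp)
  have h2D : e₂ ∉ D.edges := by
    have := (List.nodup_append.mp hnd3).2.1
    exact (List.nodup_cons.mp this).1
  have hdist : G.dist x y = A.length + i₁ + D.length := by rw [← hlen, hWlen]
  have hdxyi : G.dist x y ≤ i := hA1.2.1
  -- helper : transfer walks avoiding an edge
  have htrans : ∀ (e : Sym2 V) {u v : V} (S : G.Walk u v), e ∉ S.edges →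
      ∃ S' : (G.deleteEdges {e}).Walk u v, S'.length = S.length := by
    intro e u v S heS
    refine ⟨S.transfer _ (fun f hf => ?_), Walk.length_transfer _ _⟩
    rw [edgeSet_deleteEdges, Set.mem_diff]
    exact ⟨S.edges_subset_edgeSet hf, by rintro rfl; exact heS hf⟩
  -- the two criticality claims
  have claim1 : ∀ (e : Sym2 V), IAssoc G i e x y → e ∉ A.edges → e ∉ C.edges →
      e ∉ D.edges → (i₁ : ℕ∞) < (G.deleteEdges {e}).edist a d := by
    intro e hAe heA heC heD
    by_contra h
    push_neg at h
    have hne : (G.deleteEdges {e}).edist a d ≠ ⊤ :=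
      fun ht => by simp [ht] at h
    obtain ⟨R, hR⟩ := exists_walk_of_edist_ne_top hne
    have hRlen : R.length ≤ i₁ := by
      have : ((R.length : ℕ∞)) ≤ (i₁ : ℕ∞) := hR ▸ h
      exact_mod_cast this
    obtain ⟨A', hA'⟩ := htrans e A heA
    obtain ⟨D', hD'⟩ := htrans e D heD
    have hwalk : (G.deleteEdges {e}).edist x y ≤ ((A'.append (R.append D')).length : ℕ∞) :=
      edist_le _
    have hlen' : (A'.append (R.append D')).length ≤ i := by
      simp [Walk.length_append, hA', hD']
      omega
    have : (G.deleteEdges {e}).edist x y ≤ (i : ℕ∞) :=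
      le_trans hwalk (by exact_mod_cast hlen')
    exact absurd hAe.2.2 (not_lt.mpr this)
  have hc1 : (i₁ : ℕ∞) < (G.deleteEdges {e₁}).edist a d := claim1 e₁ hA1 h1A h1C h1D
  have hc2 : (i₁ : ℕ∞) < (G.deleteEdges {e₂}).edist a d := claim1 e₂ hA2 h2A h2C h2D
  -- dist a d = i₁
  have hdad : G.dist a d = i₁ := by
    refine le_antisymm (hMlen ▸ dist_le M) ?_
    by_contra h
    push_neg at h
    obtain ⟨N, hN⟩ := M.reachable.exists_walk_length_eq_dist
    have := dist_le (A.append (N.append D))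
    rw [Walk.length_append, Walk.length_append] at this
    omega
  have he₁G : e₁ ∈ G.edgeSet := edgeSet_subset_edgeSet.mpr hle he₁
  have he₂G : e₂ ∈ G.edgeSet := edgeSet_subset_edgeSet.mpr hle he₂
  have hIA1 : IAssoc G i₁ e₁ a d := ⟨he₁G, le_of_eq hdad, hc1⟩
  have hIA2 : IAssoc G i₁ e₂ a d := ⟨he₂G, le_of_eq hdad, hc2⟩
  -- the fixed path P := Q i₁ a d
  obtain ⟨hPpath, hPlen⟩ := hQ i₁ a d ⟨e₁, hIA1⟩
  have hPlen' : (Q i₁ a d).length = i₁ := by rw [hPlen, hdad]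
  -- both edges lie on P
  have hmem : ∀ (e : Sym2 V), (i₁ : ℕ∞) < (G.deleteEdges {e}).edist a d →
      e ∈ (Q i₁ a d).edges := by
    intro e hce
    by_contra h
    obtain ⟨P', hP'⟩ := htrans e (Q i₁ a d) h
    have h1 : (G.deleteEdges {e}).edist a d ≤ ((P'.length : ℕ) : ℕ∞) := edist_le _
    rw [hP', hPlen'] at h1
    exact absurd hce (not_lt.mpr h1)
  have h1P : e₁ ∈ (Q i₁ a d).edges := hmem e₁ hc1
  have h2P : e₂ ∈ (Q i₁ a d).edges := hmem e₂ hc2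
  have hae₁ : a ∈ e₁ := by rw [hq1]; simp
  have hde₂ : d ∈ e₂ := by rw [hq2]; simp
  -- e₁ is a t-edge: contradiction
  refine (hG₀ e₁ he₁).2 ⟨i₁, Finset.mem_Icc.mpr ⟨by omega, by omega⟩, a, d,
    ⟨e₁, hIA1⟩, hPlen', h1P, Or.inl hae₁, ?_⟩
  intro f hf hor
  rcases hor with haf | hdf
  · have : f = e₁ := edge_unique_at_start hPpath hf h1P haf hae₁
    subst this
    exact ⟨hIA1, (hG₀ f he₁).1⟩
  · have : f = e₂ := edge_unique_at_end hPpath hf h2P hdf hde₂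
    subst this
    exact ⟨hIA2, (hG₀ f he₂).1⟩

/-- If `G` is diameter-`k`-critical (`k ≥ 3`) and every edge of the subgraph `G₀` has
multiplicity less than `t` and is not a `t`-edge, then no two distinct edges of `G₀`
are `i`-associated with the same fixed `i`-critical path, for any `i ≥ 2`. -/
theorem stmt_13 {V : Type*} (G : SimpleGraph V) (k t : ℕ) (hk : 3 ≤ k)
    (hdiam : G.diam = k)
    (hcrit : ∀ e ∈ G.edgeSet, (k : ℕ∞) < ((G.deleteEdges {e}).ediam))
    (Q : ∀ (_ : ℕ) (x y : V), G.Walk x y) (hQ : AdmissibleChoice G Q)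
    (G₀ : SimpleGraph V) (hle : G₀ ≤ G)
    (hG₀ : ∀ e ∈ G₀.edgeSet, Mult G k e < t ∧ ¬ TEdge G Q k t e) :
    ∀ i, 2 ≤ i → i ≤ k → ∀ x y : V, ∀ e₁ e₂ : Sym2 V,
      e₁ ∈ G₀.edgeSet → e₂ ∈ G₀.edgeSet → e₁ ≠ e₂ →
      IAssoc G i e₁ x y → e₁ ∈ (Q i x y).edges →
      IAssoc G i e₂ x y → e₂ ∈ (Q i x y).edges → False := by
  intro i hi2 hik x y e₁ e₂ he₁ he₂ hne hA1 h1W hA2 h2W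
  obtain ⟨a, b, hab, A, B, hq1, hW⟩ := split_at_edge (Q i x y) h1W
  rw [hW, Walk.edges_append, Walk.edges_cons] at h2W
  rcases List.mem_append.mp h2W with h2A | h2B
  · -- e₂ comes before e₁
    obtain ⟨c, d, hcd, A₁, A₂, hq2, hA⟩ := split_at_edge A h2A
    have hW' : Q i x y = A₁.append (Walk.cons hcd (A₂.append (Walk.cons hab B))) := by
      rw [hW, hA, ← Walk.cons_append, Walk.append_assoc]
    exact core hQ hle hG₀ hik he₂ he₁ hA2 hA1 hcd hab A₁ A₂ B hW' hq2 hq1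
  · rcases List.mem_cons.mp h2B with h2eq | h2B
    · exact hne (hq1 ▸ h2eq.symm ▸ rfl)
    · obtain ⟨c, d, hcd, C, D, hq2, hB⟩ := split_at_edge B h2B
      have hW' : Q i x y = A.append (Walk.cons hab (C.append (Walk.cons hcd D))) := by
        rw [hW, hB]
      exact core hQ hle hG₀ hik he₁ he₂ hA1 hA2 hab hcd A C D hW' hq1 hq2
end

section
/- Let G be a diameter-k-critical graph (k ≥ 3) and let G₀ be the subgraph obtained from G by deleting all edges of multiplicity at least t and all t-edges. Then the set of edges of G₀ that are k-associated only with k-critical paths of length at most k − 2 forms a matching in G₀; in particular there are at most n/2 such edges. -/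
open SimpleGraph

private lemma repl_aux {V : Type*} [DecidableEq V] {G : SimpleGraph V} {a b : V}
    (W : (G.deleteEdges {s(a, b)}).Walk a b) :
    ∀ {x y : V} (p : G.Walk x y), ∃ q : (G.deleteEdges {s(a, b)}).Walk x y,
      q.length + p.edges.count s(a, b) ≤ p.length + W.length * p.edges.count s(a, b) := by
  intro x y p
  induction p with
  | nil => exact ⟨.nil, by simp⟩
  | @cons u v w h p' ih =>
    obtain ⟨q', hq'⟩ := ih
    by_cases he : s(u, v) = s(a, b)
    · have hcnt : ((Walk.cons h p').edges).count s(a, b) = p'.edges.count s(a, b) + 1 := by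
        rw [SimpleGraph.Walk.edges_cons, he, List.count_cons_self]
      rcases Sym2.eq_iff.mp he with ⟨rfl, rfl⟩ | ⟨rfl, rfl⟩
      · refine ⟨W.append q', ?_⟩
        rw [SimpleGraph.Walk.length_append, hcnt, SimpleGraph.Walk.length_cons, Nat.mul_succ]
        linarith [hq']
      · refine ⟨W.reverse.append q', ?_⟩
        rw [SimpleGraph.Walk.length_append, SimpleGraph.Walk.length_reverse, hcnt,
          SimpleGraph.Walk.length_cons, Nat.mul_succ]
        linarith [hq']
    · have hadj : (G.deleteEdges {s(a, b)}).Adj u v := by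
        rw [SimpleGraph.deleteEdges_adj]
        exact ⟨h, by simpa using he⟩
      have hcnt : ((Walk.cons h p').edges).count s(a, b) = p'.edges.count s(a, b) := by
        rw [SimpleGraph.Walk.edges_cons, List.count_cons_of_ne he]
      refine ⟨Walk.cons hadj q', ?_⟩
      rw [SimpleGraph.Walk.length_cons, hcnt, SimpleGraph.Walk.length_cons]
      linarith [hq']

private lemma two_step {V : Type*} {G : SimpleGraph V} {k t : ℕ}
    {Q : ∀ (_ : ℕ) (x y : V), G.Walk x y} (hQ : AdmissibleChoice G Q) (hk : 3 ≤ k)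
    {a b d : V} (hab : G.Adj a b) (had : G.Adj a d) (hbd : b ≠ d)
    (h1 : ¬(t ≤ Mult G k s(a, b) ∨ TEdge G Q k t s(a, b)))
    (h2 : ¬(t ≤ Mult G k s(a, d) ∨ TEdge G Q k t s(a, d))) :
    (G.deleteEdges {s(a, b)}).edist b d ≤ 2 := by
  push_neg at h1 h2
  by_contra hcon
  push_neg at hcon
  have hdist2 : G.dist b d ≤ 2 := by
    simpa using SimpleGraph.dist_le (Walk.cons hab.symm (Walk.cons had Walk.nil))
  have IA1 : IAssoc G 2 s(a, b) b d := ⟨G.mem_edgeSet.mpr hab, hdist2, by exact_mod_cast hcon⟩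
  have C : ∀ p : G.Walk b d, p.length ≤ 2 → p.edges = [s(b, a), s(a, d)] := by
    intro p hp
    have hmem : s(a, b) ∈ p.edges := by
      by_contra hmem
      have hq : (G.deleteEdges {s(a, b)}).edist b d ≤ 2 := by
        refine le_trans (SimpleGraph.edist_le
          (p.toDeleteEdges {s(a, b)} ?_)) ?_
        · intro f hf
          simp only [Set.mem_singleton_iff]
          rintro rfl
          exact hmem hf
        · rw [SimpleGraph.Walk.length_transfer]
          exact_mod_cast hp
      exact absurd hq (not_le.mpr hcon)
    cases p with
    | nil => exact absurd rfl hbd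
    | @cons _ m _ h' p' =>
      cases p' with
      | nil =>
        exfalso
        simp only [SimpleGraph.Walk.edges_cons, SimpleGraph.Walk.edges_nil,
          List.mem_singleton] at hmem
        rcases Sym2.eq_iff.mp hmem with ⟨h₁, -⟩ | ⟨h₁, -⟩
        · exact hab.ne h₁
        · exact had.ne h₁
      | @cons _ m' _ h'' p'' =>
        cases p'' with
        | nil =>
          have hm : m = a := by
            simp only [SimpleGraph.Walk.edges_cons, SimpleGraph.Walk.edges_nil,
              List.mem_cons, List.not_mem_nil, or_false] at hmem
            rcases hmem with hmem | hmem
            · rcases Sym2.eq_iff.mp hmem with ⟨h₁, -⟩ | ⟨h₁, -⟩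
              · exact absurd h₁ hab.ne
              · exact h₁.symm
            · rcases Sym2.eq_iff.mp hmem with ⟨-, h₂⟩ | ⟨h₁, -⟩
              · exact absurd h₂ hbd
              · exact absurd h₁ had.ne
          subst hm
          rfl
        | cons _ _ =>
          simp only [SimpleGraph.Walk.length_cons] at hp
          omega
  have IA2 : IAssoc G 2 s(a, d) b d := by
    refine ⟨G.mem_edgeSet.mpr had, hdist2, ?_⟩
    by_contra hcon2
    push_neg at hcon2
    have hcon2 : (G.deleteEdges {s(a, d)}).edist b d ≤ 2 := by exact_mod_cast hcon2
    have hne : (G.deleteEdges {s(a, d)}).edist b d ≠ ⊤ := fun h => by simp [h] at hcon2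
    obtain ⟨q, hq⟩ := SimpleGraph.exists_walk_of_edist_ne_top hne
    have hqlen : q.length ≤ 2 := by
      rw [← hq] at hcon2
      exact_mod_cast hcon2
    have hsub : ∀ f ∈ q.edges, f ∈ G.edgeSet := by
      intro f hf
      have := q.edges_subset_edgeSet hf
      rw [SimpleGraph.edgeSet_deleteEdges] at this
      exact this.1
    have hC := C (q.transfer G hsub) (by rwa [SimpleGraph.Walk.length_transfer])
    have hqe : q.edges = [s(b, a), s(a, d)] := (q.edges_transfer hsub).symm.trans hC
    have hbad := q.edges_subset_edgeSet (e := s(a, d)) (by rw [hqe]; simp)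
    rw [SimpleGraph.edgeSet_deleteEdges] at hbad
    exact hbad.2 rfl
  obtain ⟨hQpath, hQlen⟩ := hQ 2 b d ⟨s(a, b), IA1⟩
  have hE := C (Q 2 b d) (by rw [hQlen]; exact hdist2)
  have hQlen2 : (Q 2 b d).length = 2 := by
    have := congrArg List.length hE
    rw [SimpleGraph.Walk.length_edges] at this
    simpa using this
  refine h1.2 ⟨2, Finset.mem_Icc.mpr ⟨le_refl 2, by omega⟩, b, d, ⟨s(a, b), IA1⟩, hQlen2, ?_,
    Or.inl (Sym2.mem_mk_right a b), ?_⟩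
  · rw [hE, show s(a, b) = s(b, a) from Sym2.eq_swap]
    exact List.mem_cons_self
  · intro f hf _
    rw [hE] at hf
    simp only [List.mem_cons, List.not_mem_nil, or_false] at hf
    rcases hf with rfl | rfl
    · rw [show s(b, a) = s(a, b) from Sym2.eq_swap]
      exact ⟨IA1, h1.1⟩
    · exact ⟨IA2, h2.1⟩

private lemma matching_bound {V : Type*} [Fintype V] (S : Set (Sym2 V))
    (hdiag : ∀ e ∈ S, ¬e.IsDiag)
    (hdisj : ∀ e₁ ∈ S, ∀ e₂ ∈ S, e₁ ≠ e₂ → ∀ v : V, v ∈ e₁ → v ∉ e₂) :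
    2 * S.ncard ≤ Fintype.card V := by
  classical
  have hfin : S.Finite := Set.toFinite S
  set F := hfin.toFinset with hF
  let f : Sym2 V → Finset V :=
    fun e => Sym2.lift ⟨fun x y => {x, y}, fun x y => Finset.pair_comm x y⟩ e
  have hmemf : ∀ (v : V) (e : Sym2 V), v ∈ f e ↔ v ∈ e := by
    intro v e
    induction e using Sym2.ind with
    | _ x y => simp [f, Sym2.mem_iff]
  have hcardf : ∀ e ∈ F, (f e).card = 2 := by
    intro e he
    rw [hF, Set.Finite.mem_toFinset] at he
    induction e using Sym2.ind with
    | _ x y =>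
      have hxy : x ≠ y := by
        intro h
        exact hdiag _ he (Sym2.mk_isDiag_iff.mpr h)
      simp only [f, Sym2.lift_mk]
      exact Finset.card_pair hxy
  have hdisjF : ∀ e₁ ∈ F, ∀ e₂ ∈ F, e₁ ≠ e₂ → Disjoint (f e₁) (f e₂) := by
    intro e₁ h₁ e₂ h₂ hne
    rw [hF, Set.Finite.mem_toFinset] at h₁ h₂
    rw [Finset.disjoint_left]
    intro v hv₁ hv₂
    exact hdisj e₁ h₁ e₂ h₂ hne v ((hmemf v e₁).mp hv₁) ((hmemf v e₂).mp hv₂)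
  calc 2 * S.ncard = ∑ e ∈ F, (f e).card := by
        rw [Finset.sum_congr rfl hcardf, Finset.sum_const, smul_eq_mul,
          Set.ncard_eq_toFinset_card S hfin, mul_comm]
    _ = (F.biUnion f).card := (Finset.card_biUnion hdisjF).symm
    _ ≤ Fintype.card V := Finset.card_le_univ _

/-- Let `G₀` be obtained from a diameter-`k`-critical graph `G` (`k ≥ 3`) by deleting all
edges of multiplicity at least `t` and all `t`-edges. The edges of `G₀` that are
`k`-associated only with `k`-critical pairs at distance at most `k − 2` form a matching;
in particular there are at most `n/2` of them. -/
theorem stmt_14 {V : Type*} [Fintype V] (G : SimpleGraph V) (n k t : ℕ)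
    (hn : Fintype.card V = n) (hk : 3 ≤ k) (hdiam : G.diam = k)
    (hcrit : ∀ e ∈ G.edgeSet, (k : ℕ∞) < ((G.deleteEdges {e}).ediam))
    (Q : ∀ (_ : ℕ) (x y : V), G.Walk x y) (hQ : AdmissibleChoice G Q) :
    let G₀ := G.deleteEdges {e | t ≤ Mult G k e ∨ TEdge G Q k t e}
    let S : Set (Sym2 V) :=
      {e | e ∈ G₀.edgeSet ∧ ∀ x y : V, IAssoc G k e x y → G.dist x y ≤ k - 2}
    (∀ e₁ ∈ S, ∀ e₂ ∈ S, e₁ ≠ e₂ → ∀ v : V, v ∈ e₁ → v ∉ e₂) ∧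
      2 * S.ncard ≤ n := by
  classical
  intro G₀ S
  have hmatch : ∀ e₁ ∈ S, ∀ e₂ ∈ S, e₁ ≠ e₂ → ∀ v : V, v ∈ e₁ → v ∉ e₂ := by
    rintro e₁ he₁ e₂ he₂ hne a ha₁ ha₂
    obtain ⟨b, rfl⟩ := Sym2.mem_iff_exists.mp ha₁
    obtain ⟨d, rfl⟩ := Sym2.mem_iff_exists.mp ha₂
    obtain ⟨hG₁, hS₁⟩ := he₁
    obtain ⟨hG₂, hS₂⟩ := he₂
    have hG₁ : s(a, b) ∈ (G.deleteEdges {e | t ≤ Mult G k e ∨ TEdge G Q k t e}).edgeSet := hG₁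
    have hG₂ : s(a, d) ∈ (G.deleteEdges {e | t ≤ Mult G k e ∨ TEdge G Q k t e}).edgeSet := hG₂
    rw [SimpleGraph.edgeSet_deleteEdges] at hG₁ hG₂
    have hab : G.Adj a b := G.mem_edgeSet.mp hG₁.1
    have had : G.Adj a d := G.mem_edgeSet.mp hG₂.1
    have hbd : b ≠ d := fun h => hne (by rw [h])
    -- the extended diameter of G is k
    have htop : G.ediam ≠ ⊤ := by
      intro h
      have h0 : G.diam = 0 := by simp [SimpleGraph.diam, h]
      omega
    have hed : G.ediam = (k : ℕ∞) := by
      have h1 : ((G.diam : ℕ∞)) = G.ediam := ENat.coe_toNat htop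
      rw [← h1, hdiam]
    -- a critical pair for s(a,b)
    have hcrit' : ¬((G.deleteEdges {s(a, b)}).ediam ≤ (k : ℕ∞)) :=
      not_le.mpr (hcrit _ hG₁.1)
    rw [SimpleGraph.ediam_le_iff] at hcrit'
    push_neg at hcrit'
    obtain ⟨x, y, hxy⟩ := hcrit'
    have hedxy : G.edist x y ≤ (k : ℕ∞) := hed ▸ SimpleGraph.edist_le_ediam
    have hdxy : G.dist x y ≤ k := by
      have := ENat.toNat_le_toNat hedxy (ENat.coe_ne_top k)
      simpa [SimpleGraph.dist] using this
    have hd2 : G.dist x y ≤ k - 2 := hS₁ x y ⟨hG₁.1, hdxy, hxy⟩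
    -- the short detour around s(a,b)
    have hstep : (G.deleteEdges {s(a, b)}).edist b d ≤ 2 :=
      two_step hQ hk hab had hbd hG₁.2 hG₂.2
    have hWne : (G.deleteEdges {s(a, b)}).edist b d ≠ ⊤ := fun h => by simp [h] at hstep
    obtain ⟨W0, hW0⟩ := SimpleGraph.exists_walk_of_edist_ne_top hWne
    have hW0len : W0.length ≤ 2 := by
      rw [← hW0] at hstep
      exact_mod_cast hstep
    have hadj' : (G.deleteEdges {s(a, b)}).Adj a d := by
      rw [SimpleGraph.deleteEdges_adj]
      refine ⟨had, ?_⟩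
      simp only [Set.mem_singleton_iff]
      intro h
      rcases Sym2.eq_iff.mp h with ⟨-, h₂⟩ | ⟨h₁, -⟩
      · exact hbd h₂.symm
      · exact hab.ne h₁
    let W : (G.deleteEdges {s(a, b)}).Walk a b := Walk.cons hadj' W0.reverse
    have hWlen : W.length ≤ 3 := by
      simp only [W, SimpleGraph.Walk.length_cons, SimpleGraph.Walk.length_reverse]
      omega
    -- a shortest path from x to y
    have hreach : G.Reachable x y := by
      refine SimpleGraph.reachable_of_edist_ne_top fun h => ?_
      rw [h] at hedxy
      exact absurd (top_le_iff.mp hedxy) (ENat.coe_ne_top k)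
    obtain ⟨p, hp, hplen⟩ := hreach.exists_path_of_dist
    obtain ⟨q, hq⟩ := repl_aux W p
    have hcnt : p.edges.count s(a, b) ≤ 1 :=
      List.nodup_iff_count_le_one.mp hp.edges_nodup _
    have hqk : q.length ≤ k := by
      rcases Nat.le_one_iff_eq_zero_or_eq_one.mp hcnt with h | h <;>
        rw [h] at hq <;> simp only [Nat.mul_zero, Nat.mul_one, Nat.add_zero] at hq <;> omega
    have hfin : (G.deleteEdges {s(a, b)}).edist x y ≤ (k : ℕ∞) :=
      le_trans (SimpleGraph.edist_le q) (Nat.cast_le.mpr hqk)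
    exact absurd hfin (not_le.mpr hxy)
  refine ⟨hmatch, ?_⟩
  have hdiag : ∀ e ∈ S, ¬e.IsDiag := by
    intro e he
    have h1 : e ∈ (G.deleteEdges {e | t ≤ Mult G k e ∨ TEdge G Q k t e}).edgeSet := he.1
    rw [SimpleGraph.edgeSet_deleteEdges] at h1
    exact G.not_isDiag_of_mem_edgeSet h1.1
  have := matching_bound S hdiag hmatch
  omega
end

section
/- Let G be a diameter-k-critical graph (k ≥ 3) on n vertices and let G₀ be the subgraph obtained by deleting edges of multiplicity ≥ t and t-edges. Then one can find at least (k−1)·(e(G₀) − n/2) distinct critical pairs, i.e., pairs {x,y} such that some edge e satisfies d_G(x,y) ≤ i and d_{G−e}(x,y) > i for some 2 ≤ i ≤ k. -/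
open SimpleGraph

namespace StmtAux
open SimpleGraph Walk

variable {V : Type*} {G : SimpleGraph V}

lemma iassoc_symm {i : ℕ} {e : Sym2 V} {x y : V} (h : IAssoc G i e x y) : IAssoc G i e y x :=
  ⟨h.1, by rw [SimpleGraph.dist_comm]; exact h.2.1, by rw [SimpleGraph.edist_comm]; exact h.2.2⟩


lemma edge_mem_of_iassoc {i : ℕ} {e : Sym2 V} {x y : V} (h : IAssoc G i e x y)
    (W : G.Walk x y) (hW : W.length ≤ i) : e ∈ W.edges := by
  by_contra he
  have hsub : ∀ f ∈ W.edges, f ∈ (G.deleteEdges {e}).edgeSet := by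
    intro f hf
    rw [SimpleGraph.edgeSet_deleteEdges]
    refine ⟨W.edges_subset_edgeSet hf, ?_⟩
    simp only [Set.mem_singleton_iff]
    rintro rfl; exact he hf
  have h1 : (G.deleteEdges {e}).edist x y ≤ (W.length : ℕ∞) := by
    have := SimpleGraph.edist_le (W.transfer _ hsub)
    rwa [Walk.length_transfer] at this
  have h2 : (W.length : ℕ∞) ≤ (i : ℕ∞) := by exact_mod_cast hW
  exact absurd h.2.2 (not_lt.mpr (h1.trans h2))


lemma end_edge_unique {a b : V} (W : G.Walk a b) (hW : W.IsPath)
    {f g : Sym2 V} (hf : f ∈ W.edges) (hg : g ∈ W.edges) (haf : a ∈ f) (hag : a ∈ g) :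
    f = g := by
  cases W with
  | nil => simp at hf
  | @cons _ c _ h p =>
    rw [Walk.cons_isPath_iff] at hW
    have key : ∀ q ∈ (Walk.cons h p).edges, a ∈ q → q = s(a, c) := by
      intro q hq haq
      rw [Walk.edges_cons, List.mem_cons] at hq
      rcases hq with rfl | hq
      · rfl
      · exfalso
        induction q with
        | _ z w =>
          rcases Sym2.mem_iff.mp haq with rfl | rfl
          · exact hW.2 (p.fst_mem_support_of_mem_edges hq)
          · exact hW.2 (p.snd_mem_support_of_mem_edges hq)
    rw [key f hf haf, key g hg hag]


lemma decomp_at_edge {x y : V} (P : G.Walk x y) {e : Sym2 V} (he : e ∈ P.edges) :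
    ∃ (u v : V) (h : G.Adj u v) (W₁ : G.Walk x u) (W₂ : G.Walk v y),
      e = s(u, v) ∧ P = W₁.append (Walk.cons h W₂) := by
  induction P with
  | nil => simp at he
  | @cons a c b h p ih =>
    rw [Walk.edges_cons, List.mem_cons] at he
    rcases he with rfl | he
    · exact ⟨a, c, h, Walk.nil, p, rfl, rfl⟩
    · obtain ⟨u, v, hadj, W₁, W₂, he', hsplit⟩ := ih he
      exact ⟨u, v, hadj, Walk.cons h W₁, W₂, he', by rw [Walk.cons_append, hsplit]⟩


lemma edist_delete_gt {e : Sym2 V} {x y a b : V} {i k : ℕ}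
    (hIA : IAssoc G k e x y)
    (W1 : G.Walk x a) (W2 : G.Walk b y)
    (h1 : e ∉ W1.edges) (h2 : e ∉ W2.edges)
    (hlen : W1.length + i + W2.length ≤ k) :
    (i : ℕ∞) < (G.deleteEdges {e}).edist a b := by
  by_contra hcon
  push_neg at hcon
  have hne : (G.deleteEdges {e}).edist a b ≠ ⊤ := by
    intro h; rw [h] at hcon; exact absurd hcon (by simp)
  obtain ⟨T, hT⟩ := SimpleGraph.exists_walk_of_edist_ne_top hne
  have hTlen : T.length ≤ i := by
    have : (T.length : ℕ∞) ≤ (i : ℕ∞) := hT ▸ hcon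
    exact_mod_cast this
  have hsub1 : ∀ f ∈ W1.edges, f ∈ (G.deleteEdges {e}).edgeSet := by
    intro f hf
    rw [SimpleGraph.edgeSet_deleteEdges]
    refine ⟨W1.edges_subset_edgeSet hf, ?_⟩
    simp only [Set.mem_singleton_iff]; rintro rfl; exact h1 hf
  have hsub2 : ∀ f ∈ W2.edges, f ∈ (G.deleteEdges {e}).edgeSet := by
    intro f hf
    rw [SimpleGraph.edgeSet_deleteEdges]
    refine ⟨W2.edges_subset_edgeSet hf, ?_⟩
    simp only [Set.mem_singleton_iff]; rintro rfl; exact h2 hf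
  have hbig := SimpleGraph.edist_le (((W1.transfer _ hsub1).append T).append (W2.transfer _ hsub2))
  rw [Walk.length_append, Walk.length_append, Walk.length_transfer, Walk.length_transfer] at hbig
  have hle : (W1.length + T.length + W2.length : ℕ) ≤ k := by omega
  have : (G.deleteEdges {e}).edist x y ≤ (k : ℕ∞) := hbig.trans (by exact_mod_cast hle)
  exact absurd hIA.2.2 (not_lt.mpr this)


lemma dist_eq_middle {x y a b : V} {D : ℕ}
    (hxy : G.edist x y = (D : ℕ∞))
    (W1 : G.Walk x a) (M : G.Walk a b) (W2 : G.Walk b y)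
    (hlen : W1.length + M.length + W2.length = D) :
    G.dist a b = M.length := by
  refine le_antisymm (SimpleGraph.dist_le M) ?_
  by_contra hlt
  push_neg at hlt
  obtain ⟨T, hT⟩ := (M.reachable).exists_walk_length_eq_dist
  have hbig := SimpleGraph.edist_le ((W1.append T).append W2)
  rw [Walk.length_append, Walk.length_append, hxy] at hbig
  have : D ≤ W1.length + T.length + W2.length := by exact_mod_cast hbig
  omega


/-- The set of critical pairs "claimed" by an edge `e`. -/
def Claimed (G : SimpleGraph V) (k : ℕ) (e p : Sym2 V) : Prop :=
  (∃ a h i, p = s(a, h) ∧ h ∈ e ∧ 2 ≤ i ∧ i ≤ k ∧ G.dist a h = i ∧ IAssoc G i e a h) ∨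
  (p = e ∧ ∃ u v, p = s(u, v) ∧ IAssoc G 2 e u v)

lemma claimed_mem {G : SimpleGraph V} {k : ℕ} (hk2 : 2 ≤ k) {e p : Sym2 V}
    (h : Claimed G k e p) :
    p ∈ {p : Sym2 V | ∃ x y : V, p = s(x, y) ∧ ∃ i, 2 ≤ i ∧ i ≤ k ∧ ∃ e, IAssoc G i e x y} := by
  rcases h with ⟨a, b, i, rfl, _, h2, h3, _, hIA⟩ | ⟨_, u, v, rfl, hIA⟩
  · exact ⟨a, b, rfl, i, h2, h3, e, hIA⟩
  · exact ⟨u, v, rfl, 2, le_refl 2, hk2, e, hIA⟩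

lemma claimed_unique {G : SimpleGraph V} {Q : ∀ (_ : ℕ) (x y : V), G.Walk x y}
    (hQ : AdmissibleChoice G Q) {k t : ℕ} {e e' p : Sym2 V}
    (hMe : Mult G k e < t) (hTe : ¬ TEdge G Q k t e)
    (hMe' : Mult G k e' < t)
    (hce : Claimed G k e p) (hce' : Claimed G k e' p) : e = e' := by
  by_contra hne
  rcases hce with ⟨a, b, i, hp, hbe, h2i, hik, hd, hIA⟩ | ⟨hpe, u, v, hp, hIA⟩
  · rcases hce' with ⟨a', b', i', hp', hbe', h2i', hik', hd', hIA'⟩ | ⟨hpe', u', v', hp', hIA'⟩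
    · -- sub / sub
      have hpp : s(a, b) = s(a', b') := by rw [← hp, ← hp']
      have key : IAssoc G i e' a b ∧ (b ∈ e' ∨ a ∈ e') := by
        rcases Sym2.eq_iff.mp hpp with ⟨ha, hb⟩ | ⟨ha, hb⟩
        · subst ha; subst hb
          have hii : i' = i := by rw [← hd, ← hd']
          subst hii
          exact ⟨hIA', Or.inl hbe'⟩
        · subst ha; subst hb
          have hii : i' = i := by rw [← hd, ← hd', SimpleGraph.dist_comm]
          subst hii
          exact ⟨iassoc_symm hIA', Or.inr hbe'⟩
      obtain ⟨hIA'', hor⟩ := key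
      have hW := hQ i a b ⟨e, hIA⟩
      have hWlen : (Q i a b).length = i := by rw [hW.2, hd]
      have heW : e ∈ (Q i a b).edges := edge_mem_of_iassoc hIA _ (le_of_eq hWlen)
      have he'W : e' ∈ (Q i a b).edges := edge_mem_of_iassoc hIA'' _ (le_of_eq hWlen)
      have hrevmem : ∀ f : Sym2 V, f ∈ (Q i a b).edges → f ∈ (Q i a b).reverse.edges := by
        intro f hf; rw [Walk.edges_reverse, List.mem_reverse]; exact hf
      rcases hor with hbe' | hae'
      · -- both e, e' contain b : they are both the last edge
        exact hne (end_edge_unique (Q i a b).reverse hW.1.reverse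
          (hrevmem e heW) (hrevmem e' he'W) hbe hbe')
      · -- e contains b, e' contains a : TEdge e
        refine hTe ⟨i, Finset.mem_Icc.mpr ⟨h2i, hik⟩, a, b, ⟨e, hIA⟩, hWlen, heW,
          Or.inr hbe, ?_⟩
        intro f hf hor'
        rcases hor' with haf | hbf
        · have hfe' : f = e' := end_edge_unique (Q i a b) hW.1 hf he'W haf hae'
          rw [hfe']; exact ⟨hIA'', hMe'⟩
        · have hfe : f = e := end_edge_unique (Q i a b).reverse hW.1.reverse
            (hrevmem f hf) (hrevmem e heW) hbf hbe
          rw [hfe]; exact ⟨hIA, hMe⟩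
    · -- sub / bonus
      have hadj : G.Adj a b := by
        rw [← SimpleGraph.mem_edgeSet, ← hp, hpe']
        exact hIA'.1
      have : G.dist a b = 1 := SimpleGraph.dist_eq_one_iff_adj.mpr hadj
      omega
  · rcases hce' with ⟨a', b', i', hp', hbe', h2i', hik', hd', hIA'⟩ | ⟨hpe', u', v', hp', hIA'⟩
    · -- bonus / sub
      have hadj : G.Adj a' b' := by
        rw [← SimpleGraph.mem_edgeSet, ← hp', hpe]
        exact hIA.1
      have : G.dist a' b' = 1 := SimpleGraph.dist_eq_one_iff_adj.mpr hadj
      omega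
    · -- bonus / bonus
      exact hne (hpe ▸ hpe' ▸ rfl)


lemma split_facts {x y α β : V} {P : G.Walk x y} (hP : P.IsPath)
    {hadj : G.Adj α β} {W₁ : G.Walk x α} {W₂ : G.Walk β y}
    (hsplit : P = W₁.append (Walk.cons hadj W₂)) :
    s(α, β) ∉ W₁.edges ∧ s(α, β) ∉ W₂.edges ∧ β ∉ W₁.support ∧ α ∉ W₂.support
      ∧ W₁.support.Nodup ∧ W₂.support.Nodup ∧ (∀ z ∈ W₁.support, z ∉ W₂.support) := by
  rw [hsplit] at hP
  rw [Walk.isPath_def, Walk.support_append, Walk.support_cons, List.tail_cons] at hP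
  obtain ⟨hnd1, hnd2, hdisj⟩ := List.nodup_append'.mp hP
  have hβ : β ∉ W₁.support := fun hb => hdisj hb W₂.start_mem_support
  have hα : α ∉ W₂.support := hdisj W₁.end_mem_support
  refine ⟨fun hmem => hβ (W₁.snd_mem_support_of_mem_edges hmem),
    fun hmem => hα (W₂.fst_mem_support_of_mem_edges hmem), hβ, hα, hnd1, hnd2, hdisj⟩

lemma split_lengths {x y α β : V} (P : G.Walk x y)
    {hadj : G.Adj α β} {W₁ : G.Walk x α} {W₂ : G.Walk β y}
    (hsplit : P = W₁.append (Walk.cons hadj W₂)) :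
    W₁.length + (W₂.length + 1) = P.length := by
  rw [hsplit, Walk.length_append, Walk.length_cons]

lemma shallow_step {e : Sym2 V} {x y u v c : V} {k : ℕ}
    (hIA : IAssoc G k e x y) (hd : G.dist x y + 2 ≤ k) (he : e = s(u, v))
    (hreach : G.Reachable x y)
    (hvc : G.Adj v c) (hne : s(v, c) ≠ e) :
    ((2 : ℕ) : ℕ∞) < (G.deleteEdges {e}).edist u c := by
  obtain ⟨P, hPlen⟩ := hreach.exists_walk_length_eq_dist
  have hPpath : P.IsPath := P.isPath_of_length_eq_dist hPlen
  have heP : e ∈ P.edges := edge_mem_of_iassoc hIA P (by omega)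
  obtain ⟨α, β, hadj, W₁, W₂, heαβ, hsplit⟩ := decomp_at_edge P heP
  obtain ⟨hne1, hne2, hβ1, hα2, -, -, -⟩ := split_facts hPpath hsplit
  rw [← heαβ] at hne1 hne2
  have hlen := split_lengths P hsplit
  rw [hPlen] at hlen
  rcases Sym2.eq_iff.mp (he.symm.trans heαβ) with ⟨rfl, rfl⟩ | ⟨rfl, rfl⟩
  · have hcv : G.Adj c v := hvc.symm
    have hW2' : e ∉ (Walk.cons hcv W₂).edges := by
      rw [Walk.edges_cons, List.mem_cons]
      push_neg
      exact ⟨fun hcb => hne (by rw [Sym2.eq_swap]; exact hcb.symm), hne2⟩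
    exact edist_delete_gt hIA W₁ (Walk.cons hcv W₂) hne1 hW2'
      (by rw [Walk.length_cons]; omega)
  · have hW1' : e ∉ (W₁.concat hvc).edges := by
      rw [Walk.edges_concat, List.concat_eq_append, List.mem_append, List.mem_singleton]
      push_neg
      exact ⟨hne1, fun h => hne h.symm⟩
    have key := edist_delete_gt (i := 2) hIA (W₁.concat hvc) W₂ hW1' hne2
      (by rw [Walk.length_concat]; omega)
    rwa [SimpleGraph.edist_comm] at key


lemma matching_lemma {G : SimpleGraph V} {Q : ∀ (_ : ℕ) (x y : V), G.Walk x y}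
    (hQ : AdmissibleChoice G Q) {k t : ℕ} (hk : 3 ≤ k)
    {u v w : V} (huv : G.Adj u v) (hvw : G.Adj v w) (huw : u ≠ w)
    (hMe : Mult G k s(u,v) < t) (hTe : ¬ TEdge G Q k t s(u,v))
    (hMe' : Mult G k s(v,w) < t)
    {x y : V} (hIA : IAssoc G k s(u,v) x y) (hd : G.dist x y + 2 ≤ k)
    (hr : G.Reachable x y)
    {x' y' : V} (hIA' : IAssoc G k s(v,w) x' y') (hd' : G.dist x' y' + 2 ≤ k)
    (hr' : G.Reachable x' y') :
    False := by
  have h2e : (2 : ℕ∞) < (G.deleteEdges {s(u,v)}).edist u w := by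
    refine shallow_step hIA hd rfl hr hvw ?_
    intro hcon
    rcases Sym2.eq_iff.mp hcon with ⟨h1, h2⟩ | ⟨h1, h2⟩
    · exact huv.ne' h1
    · exact huw h2.symm
  have h2e' : (2 : ℕ∞) < (G.deleteEdges {s(v,w)}).edist u w := by
    have := shallow_step hIA' hd' (Sym2.eq_swap) hr' huv.symm ?_
    · rwa [SimpleGraph.edist_comm] at this
    · intro hcon
      exact huw (Sym2.congr_right.mp hcon)
  -- dist u w = 2
  have hle2 : G.dist u w ≤ 2 := by
    have := SimpleGraph.dist_le (Walk.cons huv (Walk.cons hvw Walk.nil))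
    simpa using this
  have hruw : G.Reachable u w := (Walk.cons huv (Walk.cons hvw Walk.nil)).reachable
  have hne0 : G.dist u w ≠ 0 := fun h0 => huw (hruw.dist_eq_zero_iff.mp h0)
  have hne1 : G.dist u w ≠ 1 := by
    intro h1
    have hadj : G.Adj u w := SimpleGraph.dist_eq_one_iff_adj.mp h1
    have hadj' : (G.deleteEdges {s(u,v)}).Adj u w := by
      rw [SimpleGraph.deleteEdges_adj]
      refine ⟨hadj, ?_⟩
      simp only [Set.mem_singleton_iff]
      intro hcon
      exact hvw.ne' (Sym2.congr_right.mp hcon)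
    have := SimpleGraph.edist_le (Walk.cons hadj' Walk.nil)
    simp only [Walk.length_cons, Walk.length_nil] at this
    have hcon := h2e.trans_le this
    norm_num at hcon
  have hduw : G.dist u w = 2 := by omega
  have hIAuw : IAssoc G 2 s(u,v) u w := ⟨G.mem_edgeSet.mpr huv, by omega, h2e⟩
  have hIA'uw : IAssoc G 2 s(v,w) u w := ⟨G.mem_edgeSet.mpr hvw, by omega, h2e'⟩
  have hR := hQ 2 u w ⟨_, hIAuw⟩
  have hRlen : (Q 2 u w).length = 2 := by rw [hR.2, hduw]
  have heR : s(u,v) ∈ (Q 2 u w).edges := edge_mem_of_iassoc hIAuw _ (le_of_eq hRlen)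
  have he'R : s(v,w) ∈ (Q 2 u w).edges := edge_mem_of_iassoc hIA'uw _ (le_of_eq hRlen)
  have hrevmem : ∀ f : Sym2 V, f ∈ (Q 2 u w).edges → f ∈ (Q 2 u w).reverse.edges := by
    intro f hf; rw [Walk.edges_reverse, List.mem_reverse]; exact hf
  refine hTe ⟨2, Finset.mem_Icc.mpr ⟨le_refl 2, by omega⟩, u, w, ⟨_, hIAuw⟩, hRlen, heR,
    Or.inl (Sym2.mem_mk_left u v), ?_⟩
  intro f hf hor
  rcases hor with huf | hwf
  · have : f = s(u,v) := end_edge_unique _ hR.1 hf heR huf (Sym2.mem_mk_left u v)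
    rw [this]; exact ⟨hIAuw, hMe⟩
  · have : f = s(v,w) := end_edge_unique _ hR.1.reverse (hrevmem f hf) (hrevmem _ he'R)
      hwf (Sym2.mem_mk_right v w)
    rw [this]; exact ⟨hIA'uw, hMe'⟩


lemma deep_edge_pairs {G : SimpleGraph V} {Q : ∀ (_ : ℕ) (x y : V), G.Walk x y}
    (hQ : AdmissibleChoice G Q) {k : ℕ} (hk : 3 ≤ k)
    {e : Sym2 V} {x y : V} (hIA : IAssoc G k e x y)
    (hExy : G.edist x y = (G.dist x y : ℕ∞))
    (hdeep : k ≤ G.dist x y + 1) (hdk : G.dist x y ≤ k) :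
    ∃ F : Finset (Sym2 V), k - 1 ≤ F.card ∧ ∀ p ∈ F, Claimed G k e p := by
  classical
  have hP := hQ k x y ⟨e, hIA⟩
  have hPlen : (Q k x y).length = G.dist x y := hP.2
  have heP : e ∈ (Q k x y).edges := edge_mem_of_iassoc hIA _ (by omega)
  obtain ⟨u, v, hadj, W₁, W₂, he, hsplit⟩ := decomp_at_edge _ heP
  obtain ⟨hne1, hne2, hv1, hu2, hnd1, hnd2, hdisj⟩ := split_facts hP.1 hsplit
  rw [← he] at hne1 hne2
  have hlen := split_lengths _ hsplit
  rw [hPlen] at hlen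
  -- left claims
  have hleft : ∀ a ∈ W₁.support, a ≠ u → Claimed G k e s(a, v) := by
    intro a ha hneu
    have hTD : (W₁.takeUntil a ha).append (W₁.dropUntil a ha) = W₁ := W₁.take_spec ha
    have hlen1 : (W₁.takeUntil a ha).length + (W₁.dropUntil a ha).length = W₁.length := by
      have h := congrArg Walk.length hTD
      rwa [Walk.length_append] at h
    have hD1pos : 1 ≤ (W₁.dropUntil a ha).length := by
      rcases Nat.eq_zero_or_pos (W₁.dropUntil a ha).length with h0 | h
      · exact absurd (Walk.eq_of_length_eq_zero h0) hneu
      · exact h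
    have hT1e : e ∉ (W₁.takeUntil a ha).edges :=
      fun hmem => hne1 (W₁.edges_takeUntil_subset ha hmem)
    have hdav : G.dist a v = (W₁.dropUntil a ha).length + 1 := by
      have h := dist_eq_middle hExy (W₁.takeUntil a ha) ((W₁.dropUntil a ha).concat hadj) W₂
        (by rw [Walk.length_concat]; omega)
      rwa [Walk.length_concat] at h
    have hIAav : IAssoc G ((W₁.dropUntil a ha).length + 1) e a v :=
      ⟨hIA.1, le_of_eq hdav, edist_delete_gt hIA (W₁.takeUntil a ha) W₂ hT1e hne2 (by omega)⟩
    exact Or.inl ⟨a, v, (W₁.dropUntil a ha).length + 1, rfl,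
      by rw [he]; exact Sym2.mem_mk_right u v, by omega, by omega, hdav, hIAav⟩
  -- right claims
  have hright : ∀ b ∈ W₂.support, b ≠ v → Claimed G k e s(u, b) := by
    intro b hb hnev
    have hTD : (W₂.takeUntil b hb).append (W₂.dropUntil b hb) = W₂ := W₂.take_spec hb
    have hlen2 : (W₂.takeUntil b hb).length + (W₂.dropUntil b hb).length = W₂.length := by
      have h := congrArg Walk.length hTD
      rwa [Walk.length_append] at h
    have hT2pos : 1 ≤ (W₂.takeUntil b hb).length := by
      rcases Nat.eq_zero_or_pos (W₂.takeUntil b hb).length with h0 | h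
      · exact absurd (Walk.eq_of_length_eq_zero h0) (fun hh => hnev hh.symm)
      · exact h
    have hD2e : e ∉ (W₂.dropUntil b hb).edges :=
      fun hmem => hne2 (W₂.edges_dropUntil_subset hb hmem)
    have hdub : G.dist u b = (W₂.takeUntil b hb).length + 1 := by
      have h := dist_eq_middle hExy W₁ (Walk.cons hadj (W₂.takeUntil b hb)) (W₂.dropUntil b hb)
        (by rw [Walk.length_cons]; omega)
      rwa [Walk.length_cons] at h
    have hIAub : IAssoc G ((W₂.takeUntil b hb).length + 1) e u b :=
      ⟨hIA.1, le_of_eq hdub, edist_delete_gt hIA W₁ (W₂.dropUntil b hb) hne1 hD2e (by omega)⟩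
    refine Or.inl ⟨b, u, (W₂.takeUntil b hb).length + 1, Sym2.eq_swap,
      by rw [he]; exact Sym2.mem_mk_left u v, by omega, by omega, ?_, iassoc_symm hIAub⟩
    rw [SimpleGraph.dist_comm]; exact hdub
  -- bonus claim
  have hbonus : G.dist x y + 1 ≤ k → Claimed G k e e := by
    intro hdk1
    right
    refine ⟨rfl, u, v, he, hIA.1, ?_, edist_delete_gt hIA W₁ W₂ hne1 hne2 (by omega)⟩
    have h1 : G.dist u v ≤ 1 := by
      have := SimpleGraph.dist_le (Walk.cons hadj Walk.nil)
      simpa using this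
    omega
  -- the finset
  refine ⟨((W₁.support.toFinset.erase u).image (fun a => s(a, v))) ∪
          ((W₂.support.toFinset.erase v).image (fun b => s(u, b))) ∪
          (if G.dist x y + 1 ≤ k then {e} else ∅), ?_, ?_⟩
  · -- cardinality
    have hinj1 : Set.InjOn (fun a => s(a, v)) (W₁.support.toFinset.erase u : Finset V) := by
      intro a ha a' ha' hEq
      have hav : a ≠ v := fun hh =>
        hv1 (by rw [← hh]; exact List.mem_toFinset.mp (Finset.mem_of_mem_erase ha))
      rcases Sym2.eq_iff.mp hEq with ⟨h1, _⟩ | ⟨h1, _⟩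
      · exact h1
      · exact absurd h1 hav
    have hinj2 : Set.InjOn (fun b => s(u, b)) (W₂.support.toFinset.erase v : Finset V) := by
      intro b hb b' hb' hEq
      rcases Sym2.eq_iff.mp hEq with ⟨_, h2⟩ | ⟨h1, h2⟩
      · exact h2
      · exact absurd (h2 ▸ List.mem_toFinset.mp (Finset.mem_of_mem_erase hb)) hu2
    have hcard1 : ((W₁.support.toFinset.erase u).image (fun a => s(a, v))).card = W₁.length := by
      rw [Finset.card_image_of_injOn hinj1,
        Finset.card_erase_of_mem (List.mem_toFinset.mpr W₁.end_mem_support),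
        List.toFinset_card_of_nodup hnd1, Walk.length_support]
      omega
    have hcard2 : ((W₂.support.toFinset.erase v).image (fun b => s(u, b))).card = W₂.length := by
      rw [Finset.card_image_of_injOn hinj2,
        Finset.card_erase_of_mem (List.mem_toFinset.mpr W₂.start_mem_support),
        List.toFinset_card_of_nodup hnd2, Walk.length_support]
      omega
    have hd12 : Disjoint ((W₁.support.toFinset.erase u).image (fun a => s(a, v)))
        ((W₂.support.toFinset.erase v).image (fun b => s(u, b))) := by
      rw [Finset.disjoint_left]
      intro p hp1 hp2
      obtain ⟨a, ha, rfl⟩ := Finset.mem_image.mp hp1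
      obtain ⟨b, hb, hEq⟩ := Finset.mem_image.mp hp2
      rcases Sym2.eq_iff.mp hEq with ⟨h1, h2⟩ | ⟨h1, h2⟩
      · exact (Finset.mem_erase.mp ha).1 h1.symm
      · exact hadj.ne h1
    have hdb : Disjoint (((W₁.support.toFinset.erase u).image (fun a => s(a, v))) ∪
        ((W₂.support.toFinset.erase v).image (fun b => s(u, b))))
        (if G.dist x y + 1 ≤ k then ({e} : Finset (Sym2 V)) else ∅) := by
      rw [Finset.disjoint_right]
      intro p hp hpu
      split_ifs at hp with hcond
      · rw [Finset.mem_singleton] at hp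
        subst hp
        rcases Finset.mem_union.mp hpu with hp1 | hp2
        · obtain ⟨a, ha, hEq⟩ := Finset.mem_image.mp hp1
          rw [he] at hEq
          rcases Sym2.eq_iff.mp hEq with ⟨h1, h2⟩ | ⟨h1, h2⟩
          · exact (Finset.mem_erase.mp ha).1 h1
          · exact hv1 (by rw [← h1]; exact List.mem_toFinset.mp (Finset.mem_of_mem_erase ha))
        · obtain ⟨b, hb, hEq⟩ := Finset.mem_image.mp hp2
          rw [he] at hEq
          rcases Sym2.eq_iff.mp hEq with ⟨h1, h2⟩ | ⟨h1, h2⟩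
          · exact (Finset.mem_erase.mp hb).1 h2
          · exact hadj.ne h1
      · simp at hp
    rw [Finset.card_union_of_disjoint hdb, Finset.card_union_of_disjoint hd12, hcard1, hcard2]
    split_ifs with hcond
    · rw [Finset.card_singleton]; omega
    · simp only [Finset.card_empty]; omega
  · -- membership
    intro p hp
    rcases Finset.mem_union.mp hp with hp' | hpb
    · rcases Finset.mem_union.mp hp' with hp1 | hp2
      · obtain ⟨a, ha, rfl⟩ := Finset.mem_image.mp hp1
        obtain ⟨hne, hmem⟩ := Finset.mem_erase.mp ha
        exact hleft a (List.mem_toFinset.mp hmem) hne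
      · obtain ⟨b, hb, rfl⟩ := Finset.mem_image.mp hp2
        obtain ⟨hne, hmem⟩ := Finset.mem_erase.mp hb
        exact hright b (List.mem_toFinset.mp hmem) hne
    · split_ifs at hpb with hcond
      · rw [Finset.mem_singleton] at hpb
        subst hpb
        exact hbonus hcond
      · simp at hpb


end StmtAux

/-- Let `G₀` be obtained from a diameter-`k`-critical graph `G` (`k ≥ 3`) on `n` vertices
by deleting all edges of multiplicity at least `t` and all `t`-edges. Then there are at
least `(k−1)·(e(G₀) − n/2)` distinct critical pairs, i.e. pairs `{x,y}` such that some
edge `e` satisfies `d_G(x,y) ≤ i` and `d_{G−e}(x,y) > i` for some `2 ≤ i ≤ k`. -/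
theorem stmt_15 {V : Type*} [Fintype V] (G : SimpleGraph V) (n k t : ℕ)
    (hn : Fintype.card V = n) (hk : 3 ≤ k) (hdiam : G.diam = k)
    (hcrit : ∀ e ∈ G.edgeSet, (k : ℕ∞) < ((G.deleteEdges {e}).ediam))
    (Q : ∀ (_ : ℕ) (x y : V), G.Walk x y) (hQ : AdmissibleChoice G Q) :
    let G₀ := G.deleteEdges {e | t ≤ Mult G k e ∨ TEdge G Q k t e}
    ((k : ℝ) - 1) * ((G₀.edgeSet.ncard : ℝ) - n / 2) ≤
      ({p : Sym2 V | ∃ x y : V, p = s(x, y) ∧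
        ∃ i, 2 ≤ i ∧ i ≤ k ∧ ∃ e, IAssoc G i e x y}.ncard : ℝ) := by
    classical
  intro G₀
  set BigSet := {p : Sym2 V | ∃ x y : V, p = s(x, y) ∧
        ∃ i, 2 ≤ i ∧ i ≤ k ∧ ∃ e, IAssoc G i e x y} with hBigSetDef
  -- basic facts
  have hediam_ne : G.ediam ≠ ⊤ := SimpleGraph.ediam_ne_top_of_diam_ne_zero (by rw [hdiam]; omega)
  have hdist_le : ∀ a b : V, G.dist a b ≤ k := by
    intro a b; rw [← hdiam]; exact SimpleGraph.dist_le_diam hediam_ne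
  have hedist_ne : ∀ a b : V, G.edist a b ≠ ⊤ := by
    intro a b hcon
    exact hediam_ne (top_le_iff.mp (hcon ▸ SimpleGraph.edist_le_ediam))
  have hedist_cast : ∀ a b : V, G.edist a b = (G.dist a b : ℕ∞) := by
    intro a b
    exact (ENat.coe_toNat (hedist_ne a b)).symm
  have hreach : ∀ a b : V, G.Reachable a b := fun a b =>
    SimpleGraph.reachable_of_edist_ne_top (hedist_ne a b)
  -- facts about surviving edges
  have hE0 : ∀ e ∈ G₀.edgeSet, e ∈ G.edgeSet ∧ Mult G k e < t ∧ ¬ TEdge G Q k t e := by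
    intro e he
    have he' : e ∈ G.edgeSet \ {e | t ≤ Mult G k e ∨ TEdge G Q k t e} := by
      rw [← SimpleGraph.edgeSet_deleteEdges]
      exact he
    obtain ⟨h1, h2⟩ := he'
    rw [Set.mem_setOf_eq] at h2
    push_neg at h2
    exact ⟨h1, by omega, h2.2⟩
  -- every edge has a critical pair
  have hpair : ∀ e ∈ G.edgeSet, ∃ a b : V, IAssoc G k e a b := by
    intro e he
    by_contra hno
    push_neg at hno
    have hle : (G.deleteEdges {e}).ediam ≤ (k : ℕ∞) := by
      apply SimpleGraph.ediam_le_of_edist_le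
      intro a b
      by_contra hab
      push_neg at hab
      exact hno a b ⟨he, hdist_le a b, hab⟩
    exact absurd (hcrit e he) (not_lt.mpr hle)
  -- Finset of surviving edges
  have hfinE : (G₀.edgeSet).Finite := Set.toFinite _
  set E0 : Finset (Sym2 V) := hfinE.toFinset with hE0def
  have hE0mem : ∀ {e : Sym2 V}, e ∈ E0 ↔ e ∈ G₀.edgeSet := fun {e} => hfinE.mem_toFinset
  set dp : Sym2 V → Prop := fun e => ∃ a b : V, IAssoc G k e a b ∧ k ≤ G.dist a b + 1 with hdpdef
  set CI := E0.filter dp with hCIdef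
  set CII := E0.filter (fun e => ¬ dp e) with hCIIdef
  have hsplitc : CI.card + CII.card = E0.card :=
    Finset.card_filter_add_card_filter_not (p := dp)
  -- per-edge claimed pair families for deep edges
  have hCIfin : ∀ e ∈ CI, ∃ F : Finset (Sym2 V),
      (k - 1 ≤ F.card ∧ ∀ p ∈ F, StmtAux.Claimed G k e p) := by
    intro e he
    obtain ⟨hmemE, hdeepe⟩ := Finset.mem_filter.mp he
    obtain ⟨a, b, hIA, hd⟩ := hdeepe
    exact StmtAux.deep_edge_pairs hQ hk hIA (hedist_cast a b) hd (hdist_le a b)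
  choose Fch hFcard hFclaim using hCIfin
  -- the families are pairwise disjoint
  have hdisjF : ∀ e₁ (h₁ : e₁ ∈ CI), ∀ e₂ (h₂ : e₂ ∈ CI), e₁ ≠ e₂ →
      Disjoint (Fch e₁ h₁) (Fch e₂ h₂) := by
    intro e₁ h₁ e₂ h₂ hne
    rw [Finset.disjoint_left]
    intro p hp1 hp2
    obtain ⟨-, hM1, hT1⟩ := hE0 e₁ (hE0mem.mp (Finset.mem_filter.mp h₁).1)
    obtain ⟨-, hM2, -⟩ := hE0 e₂ (hE0mem.mp (Finset.mem_filter.mp h₂).1)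
    exact hne (StmtAux.claimed_unique hQ hM1 hT1 hM2
      (hFclaim e₁ h₁ p hp1) (hFclaim e₂ h₂ p hp2))
  -- count claimed pairs
  have hfinB : BigSet.Finite := Set.toFinite _
  have hcount1 : (k - 1) * CI.card ≤ BigSet.ncard := by
    have hTcard : (k - 1) * CI.card ≤ (CI.attach.biUnion (fun e => Fch e.1 e.2)).card := by
      rw [Finset.card_biUnion (fun a _ b _ hab =>
        hdisjF a.1 a.2 b.1 b.2 (fun h => hab (Subtype.ext h)))]
      calc (k - 1) * CI.card = ∑ _e ∈ CI.attach, (k - 1) := by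
            rw [Finset.sum_const, Finset.card_attach, smul_eq_mul, mul_comm]
        _ ≤ ∑ e ∈ CI.attach, (Fch e.1 e.2).card :=
            Finset.sum_le_sum (fun e _ => hFcard e.1 e.2)
    have hTsub : (CI.attach.biUnion (fun e => Fch e.1 e.2)) ⊆ hfinB.toFinset := by
      intro p hp
      rw [Set.Finite.mem_toFinset]
      obtain ⟨e, hmem, hpe⟩ := Finset.mem_biUnion.mp hp
      exact StmtAux.claimed_mem (by omega) (hFclaim e.1 e.2 p hpe)
    rw [Set.ncard_eq_toFinset_card BigSet hfinB]
    exact hTcard.trans (Finset.card_le_card hTsub)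
  -- shallow edges form a matching
  have hCIIdisj : ∀ e₁ ∈ CII, ∀ e₂ ∈ CII, e₁ ≠ e₂ → ∀ z, z ∈ e₁ → z ∉ e₂ := by
    intro e₁ h₁ e₂ h₂ hne z hz1 hz2
    obtain ⟨hm1, hnd1⟩ := Finset.mem_filter.mp h₁
    obtain ⟨hm2, hnd2⟩ := Finset.mem_filter.mp h₂
    obtain ⟨hg1, hM1, hT1⟩ := hE0 e₁ (hE0mem.mp hm1)
    obtain ⟨hg2, hM2, hT2⟩ := hE0 e₂ (hE0mem.mp hm2)
    obtain ⟨u, he1⟩ := Sym2.mem_iff_exists.mp hz1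
    obtain ⟨w, he2⟩ := Sym2.mem_iff_exists.mp hz2
    rw [Sym2.eq_swap] at he1
    subst he1
    subst he2
    have hadj1 : G.Adj u z := G.mem_edgeSet.mp hg1
    have hadj2 : G.Adj z w := G.mem_edgeSet.mp hg2
    have hune : u ≠ w := by
      rintro rfl
      exact hne (Sym2.eq_swap)
    obtain ⟨x, y, hIA1⟩ := hpair _ hg1
    obtain ⟨x', y', hIA2⟩ := hpair _ hg2
    have hsh1 : G.dist x y + 2 ≤ k := by
      by_contra hcon
      push_neg at hcon
      exact hnd1 ⟨x, y, hIA1, by omega⟩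
    have hsh2 : G.dist x' y' + 2 ≤ k := by
      by_contra hcon
      push_neg at hcon
      exact hnd2 ⟨x', y', hIA2, by omega⟩
    exact StmtAux.matching_lemma hQ hk hadj1 hadj2 hune hM1 hT1 hM2
      hIA1 hsh1 (hreach x y) hIA2 hsh2 (hreach x' y')
  -- hence 2 * CII.card ≤ n
  have hmat : 2 * CII.card ≤ n := by
    set SS : Sym2 V → Finset V := fun e => Finset.univ.filter (· ∈ e) with hSS
    have hScard : ∀ e ∈ CII, (SS e).card = 2 := by
      intro e he
      have hg : e ∈ G.edgeSet := (hE0 e (hE0mem.mp (Finset.mem_filter.mp he).1)).1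
      clear he
      induction e using Sym2.ind with
      | _ u v =>
        have hadj : G.Adj u v := G.mem_edgeSet.mp hg
        have hSSe : SS s(u, v) = {u, v} := by
          ext z
          simp [hSS, Sym2.mem_iff]
        rw [hSSe, Finset.card_insert_of_notMem (by simp [hadj.ne]), Finset.card_singleton]
    have hdisjS : ∀ e₁ ∈ CII, ∀ e₂ ∈ CII, e₁ ≠ e₂ → Disjoint (SS e₁) (SS e₂) := by
      intro e₁ h₁ e₂ h₂ hne
      rw [Finset.disjoint_left]
      intro z hz1 hz2
      simp only [hSS, Finset.mem_filter, Finset.mem_univ, true_and] at hz1 hz2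
      exact hCIIdisj e₁ h₁ e₂ h₂ hne z hz1 hz2
    have hcb := Finset.card_biUnion hdisjS
    have hsum : ∑ e ∈ CII, (SS e).card = 2 * CII.card := by
      rw [Finset.sum_congr rfl hScard, Finset.sum_const, smul_eq_mul, mul_comm]
    have hle : (CII.biUnion SS).card ≤ n := by
      rw [← hn, ← Finset.card_univ]
      exact Finset.card_le_card (Finset.subset_univ _)
    rw [hcb, hsum] at hle
    exact hle
  -- final arithmetic
  have hE0card : G₀.edgeSet.ncard = E0.card := Set.ncard_eq_toFinset_card _ hfinE
  rw [hE0card]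
  have hkR : (3 : ℝ) ≤ (k : ℝ) := by exact_mod_cast hk
  have h1 : ((k - 1 : ℕ) : ℝ) = (k : ℝ) - 1 := by
    have hk1 : (1 : ℕ) ≤ k := by omega
    push_cast [Nat.cast_sub hk1]
    ring
  have c1 : ((k - 1 : ℕ) : ℝ) * (CI.card : ℝ) ≤ (BigSet.ncard : ℝ) := by
    exact_mod_cast hcount1
  rw [h1] at c1
  have c2 : (CII.card : ℝ) ≤ (n : ℝ) / 2 := by
    have h2m : ((2 * CII.card : ℕ) : ℝ) ≤ (n : ℝ) := by exact_mod_cast hmat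
    push_cast at h2m
    linarith
  have c3 : (E0.card : ℝ) = (CI.card : ℝ) + (CII.card : ℝ) := by exact_mod_cast hsplitc.symm
  rw [c3]
  have p1 : (0 : ℝ) ≤ (CI.card : ℝ) := by positivity
  have p2 : (0 : ℝ) ≤ (CII.card : ℝ) := by positivity
  have p3 : (0 : ℝ) ≤ (BigSet.ncard : ℝ) := by positivity
  nlinarith [c1, c2, hkR, p1, p2, p3]
end

section
/- Let G be a graph of diameter k ≥ 2 and let G₀ be the subgraph obtained by deleting from G all edges of multiplicity at least t and all t-edges. Then every critical pair {x,y} of G satisfies N_{G₀}(x) ∩ N_{G₀}(y) = ∅. -/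
open SimpleGraph

private lemma walk_len1 {V : Type*} {G : SimpleGraph V} {x y : V} (p : G.Walk x y)
    (h : p.length = 1) : G.Adj x y := by
  match p with
  | .nil => simp at h
  | .cons h1 .nil => exact h1
  | .cons h1 (.cons h2 q) => simp [SimpleGraph.Walk.length_cons] at h

private lemma walk_len2 {V : Type*} {G : SimpleGraph V} {x y : V} (p : G.Walk x y)
    (h : p.length = 2) :
    ∃ b, G.Adj x b ∧ G.Adj b y ∧ p.edges = [s(x, b), s(b, y)] := by
  match p with
  | .nil => simp at h
  | .cons h1 .nil => simp at h
  | .cons h1 (.cons h2 .nil) => exact ⟨_, h1, h2, by simp⟩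
  | .cons h1 (.cons h2 (.cons h3 q)) => simp [SimpleGraph.Walk.length_cons] at h


/-- Let `G` have diameter `k ≥ 2` and let `G₀` be obtained from `G` by deleting all edges
of multiplicity at least `t` and all `t`-edges. Then every critical pair `{x,y}` of `G`
satisfies `N_{G₀}(x) ∩ N_{G₀}(y) = ∅`. -/
theorem stmt_16 {V : Type*} (G : SimpleGraph V) (k t : ℕ) (hk : 2 ≤ k)
    (hdiam : G.diam = k)
    (Q : ∀ (_ : ℕ) (x y : V), G.Walk x y) (hQ : AdmissibleChoice G Q) :
    let G₀ := G.deleteEdges {e | t ≤ Mult G k e ∨ TEdge G Q k t e}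
    ∀ x y : V, (∃ i, 2 ≤ i ∧ i ≤ k ∧ ∃ e, IAssoc G i e x y) →
      G₀.neighborSet x ∩ G₀.neighborSet y = ∅ := by
  intro G₀ x y hcrit
  obtain ⟨i, hi2, hik, e, heE, hdle, hegt⟩ := hcrit
  rw [Set.eq_empty_iff_forall_notMem]
  rintro a ⟨hax, hay⟩
  simp only [mem_neighborSet, G₀, deleteEdges_adj, Set.mem_setOf_eq] at hax hay
  obtain ⟨hxa, hxaS⟩ := hax
  obtain ⟨hya, hyaS⟩ := hay
  push_neg at hxaS hyaS
  have hay' : G.Adj a y := hya.symm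
  have hxy : x ≠ y := by
    rintro rfl
    rw [edist_self] at hegt
    exact (by simp : ¬ (i:ℕ∞) < 0) hegt
  -- every common neighbor pins down e
  have hcomm : ∀ c, G.Adj x c → G.Adj c y → e = s(x,c) ∨ e = s(c,y) := by
    intro c h1 h2
    by_contra hc
    push_neg at hc
    have hle : (G.deleteEdges {e}).edist x y ≤ 2 := by
      have hw := Walk.edist_le
        (Walk.cons (by rw [deleteEdges_adj]; exact ⟨h1, by simpa using fun h => hc.1 h.symm⟩)
          (Walk.cons (by rw [deleteEdges_adj]; exact ⟨h2, by simpa using fun h => hc.2 h.symm⟩)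
            (Walk.nil : (G.deleteEdges {e}).Walk y y)))
      exact hw.trans (le_of_eq rfl)
    exact absurd hegt (not_lt.mpr (hle.trans (by exact_mod_cast hi2)))
  have hea : e = s(x,a) ∨ e = s(a,y) := hcomm a hxa hay'
  -- x and y are not adjacent
  have hnadj : ¬ G.Adj x y := by
    intro hadj
    have hne : ¬ s(x,y) = e := by
      rcases hea with rfl | rfl <;> rw [Sym2.eq_iff] <;> rintro (⟨h1, h2⟩ | ⟨h1, h2⟩)
      · exact hay'.ne h2.symm
      · exact hxa.ne h1
      · exact hxa.ne h1
      · exact hxy h1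
    have hle : (G.deleteEdges {e}).edist x y ≤ 1 := by
      have hw := Walk.edist_le
        (Walk.cons (by rw [deleteEdges_adj]; exact ⟨hadj, by simpa using hne⟩)
          (Walk.nil : (G.deleteEdges {e}).Walk y y))
      exact hw.trans (le_of_eq rfl)
    refine absurd hegt (not_lt.mpr (hle.trans ?_))
    exact_mod_cast le_trans (by norm_num) hi2
  -- the distance is exactly 2
  have hr : G.Reachable x y := ⟨.cons hxa (.cons hay' .nil)⟩
  have hd2 : G.dist x y ≤ 2 := by simpa using dist_le (.cons hxa (.cons hay' .nil))
  have hd0 : G.dist x y ≠ 0 := fun h => hxy (hr.dist_eq_zero_iff.mp h)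
  have hd1 : G.dist x y ≠ 1 := fun h => hnadj (dist_eq_one_iff_adj.mp h)
  have hdist : G.dist x y = 2 := by omega
  -- a is the unique common neighbor
  have huniq : ∀ c, G.Adj x c → G.Adj c y → c = a := by
    intro c h1 h2
    rcases hea with rfl | rfl <;> rcases hcomm c h1 h2 with h | h <;>
      rw [Sym2.eq_iff] at h <;> rcases h with ⟨ha1, ha2⟩ | ⟨ha1, ha2⟩
    · exact ha2.symm
    · exact absurd ha1 h1.ne
    · exact absurd ha1 h1.ne
    · exact absurd ha1 hxy
    · exact absurd ha1 hxa.ne'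
    · exact ha1.symm
    · exact ha1.symm
    · exact absurd ha1 hay'.ne
  -- deleting either edge of the path x-a-y leaves distance > 2
  have key : ∀ f, (f = s(x,a) ∨ f = s(a,y)) → (2:ℕ∞) < (G.deleteEdges {f}).edist x y := by
    intro f hf
    by_contra hle
    push_neg at hle
    have hnet : (G.deleteEdges {f}).edist x y ≠ ⊤ := fun h => by
      rw [h] at hle; exact (by simp : ¬ (⊤:ℕ∞) ≤ 2) hle
    obtain ⟨p, hp⟩ := exists_walk_of_edist_ne_top hnet
    have hl2 : p.length ≤ 2 := by exact_mod_cast hp ▸ hle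
    interval_cases h : p.length
    · exact hxy (SimpleGraph.Walk.eq_of_length_eq_zero h)
    · exact hnadj ((deleteEdges_adj.mp (walk_len1 p h)).1)
    · obtain ⟨b, hb1, hb2, -⟩ := walk_len2 p h
      obtain ⟨hb1', hb1f⟩ := deleteEdges_adj.mp hb1
      obtain ⟨hb2', hb2f⟩ := deleteEdges_adj.mp hb2
      have hba : b = a := huniq b hb1' hb2'
      subst hba
      simp only [Set.mem_singleton_iff] at hb1f hb2f
      rcases hf with rfl | rfl
      · exact hb1f rfl
      · exact hb2f rfl
  have hIA : ∀ f, (f = s(x,a) ∨ f = s(a,y)) → IAssoc G 2 f x y := by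
    intro f hf
    refine ⟨?_, by omega, key f hf⟩
    rcases hf with rfl | rfl
    · exact hxa
    · exact hay'
  have hIA2 : IAssoc G 2 e x y := hIA e hea
  obtain ⟨hPpath, hPlen⟩ := hQ 2 x y ⟨e, hIA2⟩
  rw [hdist] at hPlen
  obtain ⟨b, hb1, hb2, hedges⟩ := walk_len2 (Q 2 x y) hPlen
  have hba : b = a := huniq b hb1 hb2
  rw [hba] at hedges
  -- e is a t-edge
  have hmya : Mult G k s(a,y) < t := by rw [Sym2.eq_swap]; exact hyaS.1
  have htedge : TEdge G Q k t e := by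
    refine ⟨2, Finset.mem_Icc.mpr ⟨le_refl 2, hk⟩, x, y, ⟨e, hIA2⟩, hPlen, ?_, ?_, ?_⟩
    · rw [hedges]; rcases hea with rfl | rfl <;> simp
    · rcases hea with rfl | rfl
      · left; exact Sym2.mem_mk_left x a
      · right; exact Sym2.mem_mk_right a y
    · intro f hf _
      rw [hedges] at hf
      simp only [List.mem_cons, List.mem_singleton, List.not_mem_nil, or_false] at hf
      refine ⟨hIA f hf, ?_⟩
      rcases hf with rfl | rfl
      · exact hxaS.1
      · exact hmya
  rcases hea with rfl | rfl
  · exact hxaS.2 htedge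
  · exact hyaS.2 (by rwa [Sym2.eq_swap])
end

section
/- For any graph F on n vertices, e(F) + |Disj(F)| ≤ n²/2, where Disj(F) is the set of unordered pairs {x,y} of distinct vertices with N_F(x) ∩ N_F(y) = ∅. -/
open Finset

/-- `Disj(F)`: the set of unordered pairs `{x,y}` of distinct vertices with
`N_F(x) ∩ N_F(y) = ∅`. -/
def Disj {V : Type*} (F : SimpleGraph V) : Set (Sym2 V) :=
  {p | ∃ x y : V, p = s(x, y) ∧ x ≠ y ∧ F.neighborSet x ∩ F.neighborSet y = ∅}

/-- The auxiliary graph whose edges are the pairs with disjoint neighborhoods. -/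
def disjGraph {V : Type*} (F : SimpleGraph V) : SimpleGraph V where
  Adj x y := x ≠ y ∧ F.neighborSet x ∩ F.neighborSet y = ∅
  symm := ⟨fun x y ⟨h1, h2⟩ => ⟨h1.symm, by rwa [Set.inter_comm]⟩⟩
  loopless := ⟨fun x h => h.1 rfl⟩

lemma disj_eq_edgeSet {V : Type*} (F : SimpleGraph V) :
    Disj F = (disjGraph F).edgeSet := by
  ext p
  induction p using Sym2.ind with
  | _ x y =>
    constructor
    · rintro ⟨a, b, hp, hne, hint⟩
      rw [hp, SimpleGraph.mem_edgeSet]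
      exact ⟨hne, hint⟩
    · intro h
      rw [SimpleGraph.mem_edgeSet] at h
      exact ⟨x, y, rfl, h.1, h.2⟩

/-- Symmetry of a double sum over neighborhoods. -/
lemma sum_nbr_symm {V : Type*} [Fintype V] (F : SimpleGraph V)
    [DecidableRel F.Adj] (g : V → V → ℝ) :
    ∑ x, ∑ z ∈ F.neighborFinset x, g x z = ∑ x, ∑ z ∈ F.neighborFinset x, g z x := by
  simp only [SimpleGraph.neighborFinset_eq_filter, Finset.sum_filter]
  rw [Finset.sum_comm]
  refine Finset.sum_congr rfl fun x _ => Finset.sum_congr rfl fun z _ => ?_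
  congr 1
  simp [SimpleGraph.adj_comm]

/-- Füredi's lemma: for any graph `F` on `n` vertices, `e(F) + |Disj(F)| ≤ n²/2`. -/
theorem stmt_17 {V : Type*} [Fintype V] (F : SimpleGraph V) (n : ℕ)
    (hn : Fintype.card V = n) :
    (F.edgeSet.ncard : ℝ) + ((Disj F).ncard : ℝ) ≤ (n : ℝ) ^ 2 / 2 := by
  classical
  subst hn
  set G := disjGraph F with hGdef
  set N : ℝ := (Fintype.card V : ℝ) with hN
  -- choose a maximum-degree neighbor for each non-isolated vertex
  have hy : ∀ x : V, (F.neighborFinset x).Nonempty →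
      ∃ y₀ ∈ F.neighborFinset x, ∀ z ∈ F.neighborFinset x, F.degree z ≤ F.degree y₀ :=
    fun x h => Finset.exists_max_image _ _ h
  choose! y hy1 hy2 using hy
  -- G-neighbors of x avoid N_F(y x)
  have hGn : ∀ x : V, (F.neighborFinset x).Nonempty →
      G.degree x + F.degree (y x) ≤ Fintype.card V := by
    intro x hx
    have hdisj : Disjoint (G.neighborFinset x) (F.neighborFinset (y x)) := by
      rw [Finset.disjoint_left]
      intro z hz hz'
      have hadj : G.Adj x z := (SimpleGraph.mem_neighborFinset _ _ _).1 hz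
      have h2 : F.neighborSet x ∩ F.neighborSet z = ∅ := hadj.2
      have hyx : y x ∈ F.neighborSet x := by
        have := hy1 x hx
        rwa [SimpleGraph.mem_neighborFinset] at this
      have hyz : y x ∈ F.neighborSet z := by
        have h3 : F.Adj (y x) z := (SimpleGraph.mem_neighborFinset _ _ _).1 hz'
        exact h3.symm
      have : y x ∈ (∅ : Set V) := h2 ▸ Set.mem_inter hyx hyz
      exact this
    calc G.degree x + F.degree (y x)
        = (G.neighborFinset x ∪ F.neighborFinset (y x)).card :=
          (Finset.card_union_of_disjoint hdisj).symm
      _ ≤ Finset.univ.card := Finset.card_le_univ _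
      _ = Fintype.card V := Finset.card_univ
  -- Key real inequality on degree sums
  have key2 : ∑ x ∈ univ.filter (fun x => (F.neighborFinset x).Nonempty),
      (F.degree x : ℝ) ≤ ∑ x ∈ univ.filter (fun x => (F.neighborFinset x).Nonempty),
      (F.degree (y x) : ℝ) := by
    set A := univ.filter (fun x => (F.neighborFinset x).Nonempty) with hA
    have hpos : ∀ x ∈ A, (0 : ℝ) < F.degree x := by
      intro x hx
      rw [hA, Finset.mem_filter] at hx
      have := Finset.card_pos.2 hx.2
      exact_mod_cast this
    set T : ℝ := ∑ x, ∑ z ∈ F.neighborFinset x, ((F.degree z : ℝ) / (F.degree x : ℝ))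
      with hT
    have h3 : ∑ x ∈ A, (F.degree x : ℝ) ≤ T := by
      have hsymm := sum_nbr_symm F
        (fun x z => ((F.degree z : ℝ) / (F.degree x : ℝ)))
      have h2T : 2 * T = ∑ x, ∑ z ∈ F.neighborFinset x,
          ((F.degree z : ℝ) / (F.degree x : ℝ) + (F.degree x : ℝ) / (F.degree z : ℝ)) := by
        rw [two_mul]
        nth_rewrite 2 [hT]
        rw [hsymm, ← Finset.sum_add_distrib]
        exact Finset.sum_congr rfl fun x _ => by rw [← Finset.sum_add_distrib]
      have hbound : ∑ x, ∑ z ∈ F.neighborFinset x, (2 : ℝ) ≤ 2 * T := by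
        rw [h2T]
        refine Finset.sum_le_sum fun x _ => Finset.sum_le_sum fun z hz => ?_
        have hdx : (1 : ℝ) ≤ (F.degree x : ℝ) := by
          have : 0 < F.degree x := Finset.card_pos.2 ⟨z, hz⟩
          exact_mod_cast this
        have hdz : (1 : ℝ) ≤ (F.degree z : ℝ) := by
          have hxz : x ∈ F.neighborFinset z := by
            rw [SimpleGraph.mem_neighborFinset] at hz ⊢
            exact hz.symm
          have : 0 < F.degree z := Finset.card_pos.2 ⟨x, hxz⟩
          exact_mod_cast this
        rw [div_add_div _ _ (by linarith) (by linarith),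
          le_div_iff₀ (by positivity)]
        nlinarith [sq_nonneg ((F.degree x : ℝ) - (F.degree z : ℝ))]
      have hsum2 : ∑ x, ∑ z ∈ F.neighborFinset x, (2 : ℝ)
          = 2 * ∑ x, (F.degree x : ℝ) := by
        rw [Finset.mul_sum]
        refine Finset.sum_congr rfl fun x _ => ?_
        rw [Finset.sum_const, nsmul_eq_mul]
        ring_nf
        rfl
      have hAle : ∑ x ∈ A, (F.degree x : ℝ) ≤ ∑ x, (F.degree x : ℝ) :=
        Finset.sum_le_sum_of_subset_of_nonneg (Finset.filter_subset _ _)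
          (fun x _ _ => by positivity)
      nlinarith [hbound, hsum2, hAle]
    have h2 : T ≤ ∑ x ∈ A, (F.degree (y x) : ℝ) := by
      rw [hT, ← Finset.sum_filter_add_sum_filter_not univ
        (fun x => (F.neighborFinset x).Nonempty), ← hA]
      have hz : ∑ x ∈ univ.filter (fun x => ¬(F.neighborFinset x).Nonempty),
          ∑ z ∈ F.neighborFinset x, ((F.degree z : ℝ) / (F.degree x : ℝ)) = 0 := by
        refine Finset.sum_eq_zero fun x hx => ?_
        rw [Finset.mem_filter, Finset.not_nonempty_iff_eq_empty] at hx
        rw [hx.2, Finset.sum_empty]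
      rw [hz, add_zero]
      refine Finset.sum_le_sum fun x hx => ?_
      have hxA := hx
      rw [hA, Finset.mem_filter] at hxA
      have hdx := hpos x hx
      rw [← Finset.sum_div, div_le_iff₀ hdx]
      have hub : ∀ z ∈ F.neighborFinset x, (F.degree z : ℝ) ≤ (F.degree (y x) : ℝ) := by
        intro z hzx
        exact_mod_cast hy2 x hxA.2 z hzx
      calc ∑ z ∈ F.neighborFinset x, (F.degree z : ℝ)
          ≤ ∑ z ∈ F.neighborFinset x, (F.degree (y x) : ℝ) :=
            Finset.sum_le_sum hub
        _ = (F.degree (y x) : ℝ) * (F.degree x : ℝ) := by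
            rw [Finset.sum_const, nsmul_eq_mul, mul_comm]; rfl
    linarith
  -- Put together: sum of degrees bound
  have key1 : (∑ x, ((F.degree x : ℝ) + (G.degree x : ℝ))) ≤ N ^ 2 := by
    rw [← Finset.sum_filter_add_sum_filter_not univ
      (fun x => (F.neighborFinset x).Nonempty)]
    set A := univ.filter (fun x => (F.neighborFinset x).Nonempty) with hA
    have hS1 : ∑ x ∈ A, ((F.degree x : ℝ) + (G.degree x : ℝ))
        ≤ ∑ x ∈ A, (N + (F.degree x : ℝ) - (F.degree (y x) : ℝ)) := by
      refine Finset.sum_le_sum fun x hx => ?_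
      rw [hA, Finset.mem_filter] at hx
      have h := hGn x hx.2
      have h' : (G.degree x : ℝ) + (F.degree (y x) : ℝ) ≤ N := by
        rw [hN]; exact_mod_cast h
      linarith
    have hS2 : ∑ x ∈ univ.filter (fun x => ¬(F.neighborFinset x).Nonempty),
        ((F.degree x : ℝ) + (G.degree x : ℝ))
        ≤ ∑ x ∈ univ.filter (fun x => ¬(F.neighborFinset x).Nonempty), N := by
      refine Finset.sum_le_sum fun x hx => ?_
      rw [Finset.mem_filter, Finset.not_nonempty_iff_eq_empty] at hx
      have h1 : F.degree x = 0 := by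
        unfold SimpleGraph.degree
        rw [hx.2, Finset.card_empty]
      have h2 : (G.degree x : ℝ) ≤ N := by
        rw [hN]
        have hcard : (G.neighborFinset x).card ≤ Fintype.card V := by
          simpa using Finset.card_le_univ (G.neighborFinset x)
        exact_mod_cast hcard
      rw [h1]
      push_cast
      linarith
    have hsplit : ∑ x ∈ A, (N + (F.degree x : ℝ) - (F.degree (y x) : ℝ))
        + ∑ x ∈ univ.filter (fun x => ¬(F.neighborFinset x).Nonempty), N ≤ N ^ 2 := by
      have e1 : ∑ x ∈ A, (N + (F.degree x : ℝ) - (F.degree (y x) : ℝ))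
          = ∑ x ∈ A, N + (∑ x ∈ A, (F.degree x : ℝ) - ∑ x ∈ A, (F.degree (y x) : ℝ)) := by
        rw [Finset.sum_sub_distrib, Finset.sum_add_distrib]; ring
      have e2 : ∑ x ∈ A, N + ∑ x ∈ univ.filter
          (fun x => ¬(F.neighborFinset x).Nonempty), N = N * N := by
        rw [Finset.sum_const, Finset.sum_const, ← add_nsmul,
          Finset.card_filter_add_card_filter_not, nsmul_eq_mul]
        rw [Finset.card_univ, hN]
      calc ∑ x ∈ A, (N + (F.degree x : ℝ) - (F.degree (y x) : ℝ))
          + ∑ x ∈ univ.filter (fun x => ¬(F.neighborFinset x).Nonempty), N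
          = N * N + (∑ x ∈ A, (F.degree x : ℝ) - ∑ x ∈ A, (F.degree (y x) : ℝ)) := by
            rw [e1, ← e2]; ring
        _ ≤ N * N := by linarith [key2]
        _ = N ^ 2 := by ring
    linarith
  -- handshake lemmas
  have hsF : (∑ x, F.degree x) = 2 * F.edgeFinset.card :=
    SimpleGraph.sum_degrees_eq_twice_card_edges F
  have hsG : (∑ x, G.degree x) = 2 * G.edgeFinset.card :=
    SimpleGraph.sum_degrees_eq_twice_card_edges G
  have hsum : (∑ x, ((F.degree x : ℝ) + (G.degree x : ℝ)))
      = 2 * (F.edgeFinset.card : ℝ) + 2 * (G.edgeFinset.card : ℝ) := by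
    rw [Finset.sum_add_distrib]
    have h1 : (∑ x, (F.degree x : ℝ)) = ((∑ x, F.degree x : ℕ) : ℝ) := by push_cast; rfl
    have h2 : (∑ x, (G.degree x : ℝ)) = ((∑ x, G.degree x : ℕ) : ℝ) := by push_cast; rfl
    rw [h1, h2, hsF, hsG]
    push_cast
    ring
  -- ncard conversions
  have hc1 : F.edgeSet.ncard = F.edgeFinset.card := by
    rw [Set.ncard_eq_toFinset_card']
    congr 1
  have hc2 : (Disj F).ncard = G.edgeFinset.card := by
    rw [disj_eq_edgeSet, ← hGdef, Set.ncard_eq_toFinset_card']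
    congr 1
  rw [hc1, hc2]
  rw [hsum] at key1
  rw [hN] at key1
  linarith
end
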